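/- arXiv:1810.02428 — 8 statements merged into one kernel-verified Lean document; each statement's English description precedes it below -/
import Mathlib

section
/- Let A : I → B(H) be strongly continuous and t₀ ∈ I, V₀ ∈ B(H). Then the initial value problem V'(t) = A(t)V(t), V(t₀) = V₀, has a unique strong solution V : I → B(H), and this solution is norm-continuous. -/
/-!
On a compact interval `[a, b] ∋ t₀` the Banach–Steinhaus theorem bounds `‖A t‖` by some `M`, so
the Picard map `X ↦ V₀ + ∫_{t₀}^t A(s) X(s) ds`, with the integral taken in the strong operator
topology, acts on `C([a, b], B(H))`. Its `n`-th iterate is Lipschitz with constant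
`(M (b - a))ⁿ / n!`, hence a contraction for large `n`, and its fixed point (the sum of the Dyson
series) is a norm-continuous strong solution. Uniqueness is Gronwall's inequality for
`t ↦ V t ψ`, since every `A t` is `M`-Lipschitz. On a general interval `I`, `V t` is the solution on
the segment between `t₀` and `t` evaluated at `t`; by uniqueness it agrees near every point of `I`
with a solution on a compact interval, which gives differentiability and continuity.
-/

open Set Filter Topology MeasureTheory intervalIntegral
open scoped NNReal Nat Interval

section Order

variable {α : Type*} [LinearOrder α] [TopologicalSpace α] [OrderTopology α] {s : Set α} {c t : α}

lemma exists_mem_le_eventually_le_nhdsWithin (hc : c ∈ s) (hct : c ≤ t) :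
    ∃ a ∈ s, a ≤ c ∧ ∀ᶠ y in 𝓝[s] t, a ≤ y := by
  by_cases h : ∃ a ∈ s, a < c
  · obtain ⟨a, ha, hac⟩ := h
    exact ⟨a, ha, hac.le, eventually_nhdsWithin_of_eventually_nhds <|
      (eventually_gt_nhds (hac.trans_le hct)).mono fun _ => le_of_lt⟩
  · push Not at h
    exact ⟨c, hc, le_rfl, eventually_mem_nhdsWithin.mono h⟩

lemma Set.OrdConnected.exists_Icc_mem_nhdsWithin (hs : s.OrdConnected) (hc : c ∈ s)
    (ht : t ∈ s) : ∃ a b, Icc a b ⊆ s ∧ c ∈ Icc a b ∧ Icc a b ∈ 𝓝[s] t := by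
  obtain ⟨a, ha, hac, hta⟩ :=
    exists_mem_le_eventually_le_nhdsWithin (min_rec' (· ∈ s) hc ht) (min_le_right c t)
  obtain ⟨b, hb, hcb, htb⟩ := exists_mem_le_eventually_le_nhdsWithin (α := αᵒᵈ)
    (max_rec' (· ∈ s) hc ht) (le_max_right c t)
  exact ⟨a, b, hs.out ha hb, ⟨hac.trans (min_le_left c t), (le_max_left c t).trans hcb⟩,
    hta.and htb⟩

end Order

section StrongOperatorTopology

variable {X 𝕜 E F : Type*} [TopologicalSpace X] [NontriviallyNormedField 𝕜]
  [NormedAddCommGroup E] [NormedSpace 𝕜 E] [NormedAddCommGroup F] [NormedSpace 𝕜 F]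
  {A : X → E →L[𝕜] F} {S : Set X}

lemma IsCompact.exists_forall_norm_le_of_strongly_continuousOn [CompleteSpace E]
    (hS : IsCompact S) (hA : ∀ ψ, ContinuousOn (fun x => A x ψ) S) :
    ∃ C : ℝ≥0, ∀ x ∈ S, ‖A x‖ ≤ C := by
  have hpt : ∀ ψ, ∃ C, ∀ x : S, ‖A x ψ‖ ≤ C := fun ψ => by
    obtain ⟨C, hC⟩ := hS.exists_bound_of_continuousOn (hA ψ)
    exact ⟨C, fun x => hC x x.2⟩
  obtain ⟨C, hC⟩ := banach_steinhaus (g := fun x : S => A x) hpt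
  exact ⟨C.toNNReal, fun x hx => (hC ⟨x, hx⟩).trans (Real.le_coe_toNNReal C)⟩

lemma ContinuousOn.clm_apply_of_strongly_continuousOn {M : ℝ} {g : X → E}
    (hA : ∀ ψ, ContinuousOn (fun x => A x ψ) S) (hM : ∀ x ∈ S, ‖A x‖ ≤ M)
    (hg : ContinuousOn g S) : ContinuousOn (fun x => A x (g x)) S := by
  intro x hx
  rw [ContinuousWithinAt, tendsto_iff_norm_sub_tendsto_zero]
  have hbound : ∀ y ∈ S, ‖A y (g y) - A x (g x)‖ ≤ M * ‖g y - g x‖ + ‖A y (g x) - A x (g x)‖ :=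
    fun y hy => calc
      ‖A y (g y) - A x (g x)‖ = ‖A y (g y - g x) + (A y (g x) - A x (g x))‖ := by
        rw [map_sub, sub_add_sub_cancel]
      _ ≤ M * ‖g y - g x‖ + ‖A y (g x) - A x (g x)‖ :=
        (norm_add_le _ _).trans (by gcongr; exact (A y).le_of_opNorm_le (hM y hy) _)
  have hg' := tendsto_iff_norm_sub_tendsto_zero.1 (hg x hx)
  have hA' := tendsto_iff_norm_sub_tendsto_zero.1 (hA (g x) x hx)
  refine squeeze_zero' (Eventually.of_forall fun _ => norm_nonneg _)
    (eventually_nhdsWithin_of_forall hbound) ?_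
  simpa using (hg'.const_mul M).add hA'

end StrongOperatorTopology

section StrongIntegral

variable {E F : Type*} [NormedAddCommGroup E] [NormedSpace ℂ E] [CompleteSpace E]
  [NormedAddCommGroup F] [NormedSpace ℂ F] {B B' : ℝ → E →L[ℂ] F} {t₁ t₂ : ℝ}

open scoped Classical in
/-- The integral `∫_{t₁}^{t₂} B s ds` in the strong operator topology, with junk value `0` unless
`B` is strongly continuous. -/
noncomputable def strongIntegral (B : ℝ → E →L[ℂ] F) (t₁ t₂ : ℝ) : E →L[ℂ] F :=
  if hB : ∀ ψ, Continuous fun s => B s ψ then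
    LinearMap.mkContinuousOfExistsBound
      { toFun := fun ψ => ∫ s in t₁..t₂, B s ψ
        map_add' := fun ψ χ => by
          simp only [map_add]
          exact integral_add ((hB ψ).intervalIntegrable _ _) ((hB χ).intervalIntegrable _ _)
        map_smul' := fun c ψ => by
          simp only [map_smul, RingHom.id_apply]
          exact integral_smul c _ }
      (by
        obtain ⟨C, hC⟩ := isCompact_uIcc.exists_forall_norm_le_of_strongly_continuousOn
          fun ψ => (hB ψ).continuousOn (s := uIcc t₁ t₂)
        refine ⟨C * |t₂ - t₁|, fun ψ => ?_⟩
        rw [mul_right_comm]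
        exact norm_integral_le_of_norm_le_const fun s hs =>
          (B s).le_of_opNorm_le (hC s (uIoc_subset_uIcc hs)) ψ)
  else 0

lemma strongIntegral_apply (hB : ∀ ψ, Continuous fun s => B s ψ) (ψ : E) :
    strongIntegral B t₁ t₂ ψ = ∫ s in t₁..t₂, B s ψ := by
  simp [strongIntegral, hB]

lemma norm_strongIntegral_le (hB : ∀ ψ, Continuous fun s => B s ψ) {g : ℝ → ℝ}
    (hg : IntegrableOn g (Ι t₁ t₂)) (hBg : ∀ s ∈ Ι t₁ t₂, ‖B s‖ ≤ g s) :
    ‖strongIntegral B t₁ t₂‖ ≤ ∫ s in Ι t₁ t₂, g s := by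
  refine ContinuousLinearMap.opNorm_le_bound _
    (setIntegral_nonneg measurableSet_uIoc fun s hs => (norm_nonneg _).trans (hBg s hs))
    fun ψ => ?_
  rw [strongIntegral_apply hB, norm_intervalIntegral_eq, ← MeasureTheory.integral_mul_const]
  exact norm_integral_le_of_norm_le (hg.mul_const _) <|
    (ae_restrict_mem measurableSet_uIoc).mono fun s hs => (B s).le_of_opNorm_le (hBg s hs) ψ

lemma norm_strongIntegral_le_of_forall_le (hB : ∀ ψ, Continuous fun s => B s ψ) {C : ℝ}
    (hC : ∀ s ∈ Ι t₁ t₂, ‖B s‖ ≤ C) : ‖strongIntegral B t₁ t₂‖ ≤ C * |t₂ - t₁| := by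
  have := norm_strongIntegral_le hB (integrableOn_const (by simp [Real.volume_uIoc])) hC
  simpa [mul_comm, measureReal_def, Real.volume_uIoc] using this

lemma strongIntegral_self (B : ℝ → E →L[ℂ] F) (t : ℝ) : strongIntegral B t t = 0 := by
  unfold strongIntegral
  split_ifs
  · ext; simp
  · rfl

lemma strongIntegral_sub_strongIntegral (hB : ∀ ψ, Continuous fun s => B s ψ) (t₀ : ℝ) :
    strongIntegral B t₀ t₂ - strongIntegral B t₀ t₁ = strongIntegral B t₁ t₂ := by
  ext ψ
  simp only [sub_apply, strongIntegral_apply hB]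
  exact integral_interval_sub_left ((hB ψ).intervalIntegrable _ _) ((hB ψ).intervalIntegrable _ _)

lemma strongIntegral_sub (hB : ∀ ψ, Continuous fun s => B s ψ)
    (hB' : ∀ ψ, Continuous fun s => B' s ψ) :
    strongIntegral B t₁ t₂ - strongIntegral B' t₁ t₂ = strongIntegral (B - B') t₁ t₂ := by
  ext ψ
  rw [sub_apply, strongIntegral_apply hB, strongIntegral_apply hB',
    strongIntegral_apply fun ψ => (hB ψ).sub (hB' ψ)]
  exact (integral_sub ((hB ψ).intervalIntegrable _ _) ((hB' ψ).intervalIntegrable _ _)).symm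

lemma lipschitzWith_strongIntegral (hB : ∀ ψ, Continuous fun s => B s ψ) {C : ℝ≥0}
    (hC : ∀ s, ‖B s‖ ≤ C) (t₀ : ℝ) : LipschitzWith C (strongIntegral B t₀) :=
  LipschitzWith.of_dist_le_mul fun t t' => by
    rw [dist_eq_norm, strongIntegral_sub_strongIntegral hB, Real.dist_eq]
    exact norm_strongIntegral_le_of_forall_le hB fun s _ => hC s

lemma hasDerivAt_strongIntegral_apply [CompleteSpace F] (hB : ∀ ψ, Continuous fun s => B s ψ)
    (t₀ t : ℝ) (ψ : E) : HasDerivAt (fun t => strongIntegral B t₀ t ψ) (B t ψ) t := by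
  simp only [strongIntegral_apply hB]
  exact ((hB ψ).integral_hasStrictDerivAt t₀ t).hasDerivAt

end StrongIntegral

lemma integral_uIoc_mul_pow_abs_sub_div_factorial (M d t₀ t : ℝ) (n : ℕ) :
    ∫ s in Ι t₀ t, M * ((M * |s - t₀|) ^ n / n ! * d) =
      (M * |t - t₀|) ^ (n + 1) / (n + 1)! * d := by
  simp_rw [mul_pow, show ∀ s : ℝ, M * (M ^ n * |s - t₀| ^ n / n ! * d)
    = M ^ (n + 1) / n ! * d * |s - t₀| ^ n from fun s => by ring]
  rw [MeasureTheory.integral_const_mul, integral_pow_abs_sub_uIoc, Nat.factorial_succ,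
    Nat.cast_mul, Nat.cast_succ]
  field_simp

section Picard

variable {E : Type*} [NormedAddCommGroup E] [NormedSpace ℂ E]
  {A : ℝ → E →L[ℂ] E} {M : ℝ≥0} {a b t₀ : ℝ}

lemma continuous_comp_IccExtend_apply (hA : ∀ ψ, Continuous fun t => A t ψ)
    (hM : ∀ t, ‖A t‖ ≤ M) (hab : a ≤ b) (X : C(Icc a b, E →L[ℂ] E)) (ψ : E) :
    Continuous fun s => (A s ∘L IccExtend hab X s) ψ :=
  show Continuous fun s => A s (IccExtend hab X s ψ) from continuousOn_univ.1 <|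
    ContinuousOn.clm_apply_of_strongly_continuousOn (fun ψ => (hA ψ).continuousOn)
      (fun t _ => hM t) (X.continuous.Icc_extend'.clm_apply continuous_const).continuousOn

lemma norm_comp_IccExtend_le (hM : ∀ t, ‖A t‖ ≤ M) (hab : a ≤ b) (X : C(Icc a b, E →L[ℂ] E))
    (s : ℝ) : ‖A s ∘L IccExtend hab X s‖ ≤ M * ‖X‖ :=
  ((A s).opNorm_comp_le _).trans <|
    mul_le_mul (hM s) (X.norm_coe_le_norm _) (norm_nonneg _) M.coe_nonneg

variable [CompleteSpace E]

/-- The Picard map `X ↦ (t ↦ V₀ + ∫_{t₀}^t A(s) X(s) ds)`, where `X` is extended constantly outside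
`[a, b]` and the integral is taken in the strong operator topology. -/
noncomputable def picard (hA : ∀ ψ, Continuous fun t => A t ψ) (hM : ∀ t, ‖A t‖ ≤ M)
    (hab : a ≤ b) (t₀ : ℝ) (V₀ : E →L[ℂ] E) (X : C(Icc a b, E →L[ℂ] E)) :
    C(Icc a b, E →L[ℂ] E) where
  toFun t := V₀ + strongIntegral (fun s => A s ∘L IccExtend hab X s) t₀ t
  continuous_toFun := continuous_const.add <|
    ((lipschitzWith_strongIntegral (continuous_comp_IccExtend_apply hA hM hab X)
      (C := M * ‖X‖₊) (norm_comp_IccExtend_le hM hab X) t₀).continuous).comp continuous_subtype_val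

variable (hA : ∀ ψ, Continuous fun t => A t ψ) (hM : ∀ t, ‖A t‖ ≤ M) (hab : a ≤ b)
  (V₀ : E →L[ℂ] E)

lemma picard_apply (X : C(Icc a b, E →L[ℂ] E)) (t : Icc a b) :
    picard hA hM hab t₀ V₀ X t = V₀ + strongIntegral (fun s => A s ∘L IccExtend hab X s) t₀ t :=
  rfl

include hA hM in
lemma dist_picard_apply_le (ht₀ : t₀ ∈ Icc a b) {X Y : C(Icc a b, E →L[ℂ] E)} {n : ℕ} {d : ℝ}
    (hXY : ∀ t : Icc a b, dist (X t) (Y t) ≤ (M * |(t : ℝ) - t₀|) ^ n / n ! * d) (t : Icc a b) :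
    dist (picard hA hM hab t₀ V₀ X t) (picard hA hM hab t₀ V₀ Y t)
      ≤ (M * |(t : ℝ) - t₀|) ^ (n + 1) / (n + 1)! * d := by
  have hX := continuous_comp_IccExtend_apply hA hM hab X
  have hY := continuous_comp_IccExtend_apply hA hM hab Y
  rw [dist_eq_norm, picard_apply, picard_apply, add_sub_add_left_eq_sub,
    strongIntegral_sub hX hY, ← integral_uIoc_mul_pow_abs_sub_div_factorial]
  refine norm_strongIntegral_le (fun ψ => (hX ψ).sub (hY ψ))
    (Continuous.integrableOn_uIoc (by fun_prop)) fun s hs => ?_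
  have hs' : s ∈ Icc a b := uIcc_subset_Icc ht₀ t.2 (uIoc_subset_uIcc hs)
  calc ‖A s ∘L IccExtend hab X s - A s ∘L IccExtend hab Y s‖
      ≤ M * ‖X ⟨s, hs'⟩ - Y ⟨s, hs'⟩‖ := by
        rw [← ContinuousLinearMap.comp_sub, IccExtend_of_mem hab X hs',
          IccExtend_of_mem hab Y hs']
        exact ((A s).opNorm_comp_le _).trans <|
          mul_le_mul_of_nonneg_right (hM s) (norm_nonneg _)
    _ ≤ M * ((M * |s - t₀|) ^ n / n ! * d) := by
        gcongr
        exact (dist_eq_norm _ _).symm.trans_le (hXY ⟨s, hs'⟩)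

include hA hM in
lemma dist_iterate_picard_apply_le (ht₀ : t₀ ∈ Icc a b) (X Y : C(Icc a b, E →L[ℂ] E)) (n : ℕ)
    (t : Icc a b) :
    dist ((picard hA hM hab t₀ V₀)^[n] X t) ((picard hA hM hab t₀ V₀)^[n] Y t)
      ≤ (M * |(t : ℝ) - t₀|) ^ n / n ! * dist X Y := by
  induction n generalizing t with
  | zero => simpa using ContinuousMap.dist_apply_le_dist t
  | succ n ih =>
    rw [Function.iterate_succ_apply', Function.iterate_succ_apply']
    exact dist_picard_apply_le hA hM hab V₀ ht₀ ih t

include hA hM in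
lemma exists_contractingWith_iterate_picard (ht₀ : t₀ ∈ Icc a b) :
    ∃ n K, ContractingWith K (picard hA hM hab t₀ V₀)^[n] := by
  obtain ⟨n, hn⟩ := ((FloorSemiring.tendsto_pow_div_factorial_atTop (M * (b - a))).eventually
    (gt_mem_nhds zero_lt_one)).exists
  refine ⟨n, _, Real.toNNReal_lt_one.2 hn, LipschitzWith.of_dist_le_mul fun X Y => ?_⟩
  refine (ContinuousMap.dist_le (by positivity)).2 fun t => ?_
  refine (dist_iterate_picard_apply_le hA hM hab V₀ ht₀ X Y n t).trans ?_
  refine le_trans ?_ (mul_le_mul_of_nonneg_right (Real.le_coe_toNNReal _) dist_nonneg)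
  have : |(t : ℝ) - t₀| ≤ b - a := abs_sub_le_iff.2
    ⟨by linarith [t.2.2, ht₀.1], by linarith [t.2.1, ht₀.2]⟩
  gcongr

include hA hM in
theorem exists_hasDerivWithinAt_Icc_of_forall_norm_le (ht₀ : t₀ ∈ Icc a b) :
    ∃ V : ℝ → E →L[ℂ] E, Continuous V ∧ V t₀ = V₀ ∧
      ∀ ψ, ∀ t ∈ Icc a b, HasDerivWithinAt (fun s => V s ψ) (A t (V t ψ)) (Icc a b) t := by
  have hab := ht₀.1.trans ht₀.2
  have : Nonempty C(Icc a b, E →L[ℂ] E) := ⟨0⟩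
  obtain ⟨n, K, hK⟩ := exists_contractingWith_iterate_picard hA hM hab V₀ ht₀
  set X := ContractingWith.fixedPoint _ hK
  have hfix : picard hA hM hab t₀ V₀ X = X := hK.isFixedPt_fixedPoint_iterate
  have hX : ∀ t ∈ Icc a b,
      IccExtend hab X t = V₀ + strongIntegral (fun s => A s ∘L IccExtend hab X s) t₀ t := by
    intro t ht
    rw [IccExtend_of_mem hab X ht]
    exact (DFunLike.congr_fun hfix ⟨t, ht⟩).symm
  refine ⟨IccExtend hab X, X.continuous.Icc_extend', ?_, fun ψ t ht => ?_⟩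
  · rw [hX t₀ ht₀, strongIntegral_self, add_zero]
  · have := ((hasDerivAt_strongIntegral_apply (continuous_comp_IccExtend_apply hA hM hab X)
      t₀ t ψ).const_add (V₀ ψ)).hasDerivWithinAt (s := Icc a b)
    exact this.congr (fun s hs => by simp [hX s hs]) (by simp [hX t ht])

end Picard

theorem eqOn_Icc_of_hasDerivWithinAt {E : Type*} [NormedAddCommGroup E] [NormedSpace ℂ E]
    [CompleteSpace E] {A : ℝ → E →L[ℂ] E} {a b t₀ : ℝ}
    (hA : ∀ ψ, ContinuousOn (fun t => A t ψ) (Icc a b)) (ht₀ : t₀ ∈ Icc a b) {u w : ℝ → E}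
    (hu : ∀ t ∈ Icc a b, HasDerivWithinAt u (A t (u t)) (Icc a b) t)
    (hw : ∀ t ∈ Icc a b, HasDerivWithinAt w (A t (w t)) (Icc a b) t) (h₀ : u t₀ = w t₀) :
    EqOn u w (Icc a b) := by
  obtain ⟨M, hM⟩ := isCompact_Icc.exists_forall_norm_le_of_strongly_continuousOn hA
  have hlip : ∀ t ∈ Icc a b, LipschitzOnWith M (A t) univ := fun t ht =>
    ((A t).lipschitz.weaken (by exact_mod_cast hM t ht)).lipschitzOnWith
  have hu_cont : ContinuousOn u (Icc a b) := fun t ht => (hu t ht).continuousWithinAt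
  have hw_cont : ContinuousOn w (Icc a b) := fun t ht => (hw t ht).continuousWithinAt
  rw [← Icc_union_Icc_eq_Icc ht₀.1 ht₀.2]
  refine EqOn.union ?_ ?_
  · have hsub : Ioc a t₀ ⊆ Icc a b := Ioc_subset_Icc_self.trans (Icc_subset_Icc_right ht₀.2)
    have hnhds : ∀ t ∈ Ioc a t₀, Icc a b ∈ 𝓝[≤] t := fun t ht =>
      Icc_mem_nhdsLE_of_mem ⟨ht.1, (hsub ht).2⟩
    exact ODE_solution_unique_of_mem_Icc_left (fun t ht => hlip t (hsub ht))
      (hu_cont.mono (Icc_subset_Icc_right ht₀.2))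
      (fun t ht => (hu t (hsub ht)).mono_of_mem_nhdsWithin (hnhds t ht))
      (fun _ _ => mem_univ _) (hw_cont.mono (Icc_subset_Icc_right ht₀.2))
      (fun t ht => (hw t (hsub ht)).mono_of_mem_nhdsWithin (hnhds t ht))
      (fun _ _ => mem_univ _) h₀
  · have hsub : Ico t₀ b ⊆ Icc a b := Ico_subset_Icc_self.trans (Icc_subset_Icc_left ht₀.1)
    have hnhds : ∀ t ∈ Ico t₀ b, Icc a b ∈ 𝓝[≥] t := fun t ht =>
      Icc_mem_nhdsGE_of_mem ⟨(hsub ht).1, ht.2⟩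
    exact ODE_solution_unique_of_mem_Icc_right (fun t ht => hlip t (hsub ht))
      (hu_cont.mono (Icc_subset_Icc_left ht₀.1))
      (fun t ht => (hu t (hsub ht)).mono_of_mem_nhdsWithin (hnhds t ht))
      (fun _ _ => mem_univ _) (hw_cont.mono (Icc_subset_Icc_left ht₀.1))
      (fun t ht => (hw t (hsub ht)).mono_of_mem_nhdsWithin (hnhds t ht))
      (fun _ _ => mem_univ _) h₀

/-- `V` is a strong solution of the initial value problem `V'(t) = A(t) V(t)`, `V t₀ = V₀`:
for every vector `ψ`, `t ↦ V t ψ` is differentiable (within `I`) with derivative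
`A t (V t ψ)`. -/
def IsStrongSolution {H : Type*} [NormedAddCommGroup H] [InnerProductSpace ℂ H]
    (I : Set ℝ) (A : ℝ → H →L[ℂ] H) (t₀ : ℝ) (V₀ : H →L[ℂ] H)
    (V : ℝ → H →L[ℂ] H) : Prop :=
  V t₀ = V₀ ∧ ∀ ψ : H, ∀ t ∈ I, HasDerivWithinAt (fun s => V s ψ) (A t (V t ψ)) I t

namespace IsStrongSolution

variable {H : Type*} [NormedAddCommGroup H] [InnerProductSpace ℂ H] {I J : Set ℝ}
  {A : ℝ → H →L[ℂ] H} {t₀ : ℝ} {V₀ : H →L[ℂ] H} {V W : ℝ → H →L[ℂ] H}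

lemma mono (hV : IsStrongSolution I A t₀ V₀ V) (hJI : J ⊆ I) : IsStrongSolution J A t₀ V₀ V :=
  ⟨hV.1, fun ψ t ht => (hV.2 ψ t (hJI ht)).mono hJI⟩

lemma eqOn [CompleteSpace H] (hI : I.OrdConnected) (hA : ∀ ψ, ContinuousOn (fun t => A t ψ) I)
    (ht₀ : t₀ ∈ I) (hV : IsStrongSolution I A t₀ V₀ V) (hW : IsStrongSolution I A t₀ V₀ W) :
    EqOn V W I := fun t ht => by
  have hJ := hI.uIcc_subset ht₀ ht
  ext ψ
  exact eqOn_Icc_of_hasDerivWithinAt (fun ψ => (hA ψ).mono hJ) left_mem_uIcc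
    ((hV.mono hJ).2 ψ) ((hW.mono hJ).2 ψ) (by rw [hV.1, hW.1]) right_mem_uIcc

end IsStrongSolution

theorem exists_isStrongSolution_Icc {H : Type*} [NormedAddCommGroup H] [InnerProductSpace ℂ H]
    [CompleteSpace H] {A : ℝ → H →L[ℂ] H} {a b t₀ : ℝ}
    (hA : ∀ ψ, ContinuousOn (fun t => A t ψ) (Icc a b)) (ht₀ : t₀ ∈ Icc a b) (V₀ : H →L[ℂ] H) :
    ∃ V, IsStrongSolution (Icc a b) A t₀ V₀ V ∧ Continuous V := by
  have hab := ht₀.1.trans ht₀.2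
  obtain ⟨M, hM⟩ := isCompact_Icc.exists_forall_norm_le_of_strongly_continuousOn hA
  have hA' (ψ : H) : Continuous fun t => A (projIcc a b hab t) ψ :=
    (hA ψ).comp_continuous (continuous_subtype_val.comp continuous_projIcc) fun t =>
      (projIcc a b hab t).2
  obtain ⟨V, hVc, hV₀, hV⟩ := exists_hasDerivWithinAt_Icc_of_forall_norm_le hA'
    (fun t => hM _ (projIcc a b hab t).2) V₀ ht₀
  refine ⟨V, ⟨hV₀, fun ψ t ht => ?_⟩, hVc⟩
  simpa [projIcc_of_mem hab ht] using hV ψ t ht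

/-- Let `A : I → B(H)` be strongly continuous, `t₀ ∈ I`, `V₀ ∈ B(H)`.  Then
the initial value problem `V'(t) = A(t)V(t)`, `V(t₀) = V₀` has a unique strong solution
`V : I → B(H)`, and this solution is norm-continuous. -/
theorem exists_unique_strong_solution
    {H : Type*} [NormedAddCommGroup H] [InnerProductSpace ℂ H] [CompleteSpace H]
    (I : Set ℝ) (hI : I.OrdConnected) (t₀ : ℝ) (ht₀ : t₀ ∈ I)
    (A : ℝ → H →L[ℂ] H)
    (hA : ∀ ψ : H, ContinuousOn (fun t => A t ψ) I)
    (V₀ : H →L[ℂ] H) :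
    ∃ V : ℝ → H →L[ℂ] H, IsStrongSolution I A t₀ V₀ V ∧ ContinuousOn V I ∧
      ∀ W : ℝ → H →L[ℂ] H, IsStrongSolution I A t₀ V₀ W → Set.EqOn W V I := by
  -- `V t := W t t` is the solution on `uIcc t₀ t` evaluated at `t`.
  choose! W hW using fun t (ht : t ∈ I) =>
    exists_isStrongSolution_Icc (fun ψ => (hA ψ).mono (hI.uIcc_subset ht₀ ht)) left_mem_uIcc V₀
  have agree : ∀ S ⊆ I, S.OrdConnected → t₀ ∈ S → ∀ U, IsStrongSolution S A t₀ V₀ U →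
      ∀ t ∈ S, U t = W t t := fun S hSI hS ht₀S U hU t ht =>
    (hU.mono (hS.uIcc_subset ht₀S ht)).eqOn ordConnected_uIcc
      (fun ψ => (hA ψ).mono ((hS.uIcc_subset ht₀S ht).trans hSI)) left_mem_uIcc
      (hW t (hSI ht)).1 right_mem_uIcc
  have hloc : ∀ t ∈ I, ∃ U : ℝ → H →L[ℂ] H, (∀ ψ, HasDerivWithinAt (fun s => U s ψ)
      (A t (U t ψ)) I t) ∧ Continuous U ∧ U =ᶠ[𝓝[I] t] fun s => W s s := fun t ht => by
    obtain ⟨a, b, hab, ht₀ab, hnhds⟩ := hI.exists_Icc_mem_nhdsWithin ht₀ ht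
    obtain ⟨U, hU, hUc⟩ := exists_isStrongSolution_Icc (fun ψ => (hA ψ).mono hab) ht₀ab V₀
    exact ⟨U, fun ψ => (hU.2 ψ t (mem_of_mem_nhdsWithin ht hnhds)).mono_of_mem_nhdsWithin hnhds,
      hUc, mem_of_superset hnhds (agree _ hab ordConnected_Icc ht₀ab U hU)⟩
  refine ⟨fun t => W t t, ⟨(hW t₀ ht₀).1.1, fun ψ t ht => ?_⟩, fun t ht => ?_,
    fun U hU => agree I subset_rfl hI ht₀ U hU⟩
  · obtain ⟨U, hUd, -, hUW⟩ := hloc t ht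
    have hUt := hUW.eq_of_nhdsWithin ht
    simp only [← hUt]
    exact (hUd ψ).congr_of_eventuallyEq (hUW.symm.fun_comp (· ψ)) (by rw [hUt])
  · obtain ⟨U, -, hUc, hUW⟩ := hloc t ht
    exact hUc.continuousWithinAt.congr_of_eventuallyEq hUW.symm (hUW.eq_of_nhdsWithin ht).symm
end

section
/- Let H : I → B(H) be strongly continuous and pointwise self-adjoint (H(t)* = H(t) for all t). Then the unique strong solution V of V'(t) = −iH(t)V(t), V(t₀) = 1, is unitary for every t ∈ I. -/
/-!
Self-adjointness of `Hfam t` makes `t ↦ ⟪V t ψ, V t φ⟫` have derivative zero, so every `V t` is an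
isometry. For surjectivity, two isometries at norm distance `< 1` are either both unitary or both
not: if `W` is unitary and `‖U - W‖ < 1`, then `‖1 - W⋆U‖ < 1`, so `U = W (W⋆U)` is invertible and
its left inverse `U⋆` is its inverse. On a segment `[t₀, t] ⊆ I` the generators are uniformly
bounded (Banach–Steinhaus), so `V` is Lipschitz in operator norm there; being unitary is thus a
locally constant property along the segment, and it holds at `t₀`.
-/

open ContinuousLinearMap Set

section CStarRing

variable {A : Type*} [NormedRing A] [StarRing A] [CStarRing A] [CompleteSpace A]

theorem mem_unitary_of_star_mul_self_of_norm_sub_lt_one {U W : A} (hU : star U * U = 1)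
    (hW : W ∈ unitary A) (hUW : ‖U - W‖ < 1) : U ∈ unitary A := by
  have hnear : ‖1 - star W * U‖ < 1 := by
    rwa [← Unitary.star_mul_self_of_mem hW, ← mul_sub,
      CStarRing.norm_mem_unitary_mul _ (Unitary.star_mem hW), norm_sub_rev]
  have hWU : IsUnit (star W * U) := by simpa using (Units.oneSub _ hnear).isUnit
  obtain ⟨u, rfl⟩ : IsUnit U := by
    simpa [← mul_assoc, Unitary.mul_star_self_of_mem hW] using
      (Unitary.toUnits ⟨W, hW⟩).isUnit.mul hWU
  rw [Unitary.mem_iff, ← Units.inv_eq_of_mul_eq_one_left hU]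
  exact ⟨u.inv_mul, u.mul_inv⟩

theorem mem_unitary_iff_of_norm_sub_lt_one {U W : A} (hU : star U * U = 1)
    (hW : star W * W = 1) (hUW : ‖U - W‖ < 1) : U ∈ unitary A ↔ W ∈ unitary A :=
  ⟨fun h => mem_unitary_of_star_mul_self_of_norm_sub_lt_one hW h (by rwa [norm_sub_rev]),
    fun h => mem_unitary_of_star_mul_self_of_norm_sub_lt_one hU h hUW⟩

theorem IsPreconnected.mem_unitary_of_continuousOn {X : Type*} [TopologicalSpace X] {S : Set X}
    (hS : IsPreconnected S) {f : X → A} (hf : ContinuousOn f S)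
    (hiso : ∀ x ∈ S, star (f x) * f x = 1) {x₀ x : X} (hx₀ : x₀ ∈ S) (hx : x ∈ S)
    (h₀ : f x₀ ∈ unitary A) : f x ∈ unitary A := by
  have : PreconnectedSpace S := isPreconnected_iff_preconnectedSpace.mp hS
  have hloc : IsLocallyConstant fun y : S => f y ∈ unitary A := by
    refine (IsLocallyConstant.iff_eventually_eq _).mpr fun y => ?_
    filter_upwards [(continuousOn_iff_continuous_domRestrict.mp hf).continuousAt.eventually
      (Metric.ball_mem_nhds _ one_pos)] with z hz
    exact propext <| mem_unitary_iff_of_norm_sub_lt_one (hiso z z.2) (hiso y y.2)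
      (by rwa [← dist_eq_norm])
  exact (hloc.apply_eq_of_preconnectedSpace ⟨x₀, hx₀⟩ ⟨x, hx⟩).mp h₀

end CStarRing

section OperatorFamilies

variable {𝕜 E F : Type*} [NontriviallyNormedField 𝕜] [NormedAddCommGroup E] [NormedSpace 𝕜 E]
  [NormedAddCommGroup F] [NormedSpace 𝕜 F]

theorem IsCompact.exists_bound_of_continuousOn_apply [CompleteSpace E] {X : Type*}
    [TopologicalSpace X] {K : Set X} (hK : IsCompact K) {g : X → E →L[𝕜] F}
    (hg : ∀ ψ, ContinuousOn (fun x => g x ψ) K) : ∃ C, ∀ x ∈ K, ‖g x‖ ≤ C := by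
  obtain ⟨C, hC⟩ := banach_steinhaus (g := fun x : K => g x) fun ψ => by
    obtain ⟨C, hC⟩ := hK.exists_bound_of_continuousOn (hg ψ)
    exact ⟨C, fun x => hC x x.2⟩
  exact ⟨C, fun x hx => hC ⟨x, hx⟩⟩

theorem Convex.lipschitzOnWith_of_norm_hasDerivWithin_apply_le [NormedSpace ℝ F] {s : Set ℝ}
    (hs : Convex ℝ s) {f f' : ℝ → E →L[𝕜] F} {C : ℝ}
    (hf : ∀ x ∈ s, ∀ ψ, HasDerivWithinAt (fun t => f t ψ) (f' x ψ) s x)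
    (bound : ∀ x ∈ s, ‖f' x‖ ≤ C) : LipschitzOnWith C.toNNReal f s := by
  refine LipschitzOnWith.of_dist_le' fun y hy x hx => ?_
  have hC : 0 ≤ C := (norm_nonneg _).trans (bound x hx)
  rw [dist_eq_norm, dist_eq_norm]
  refine opNorm_le_bound _ (by positivity) fun ψ => ?_
  calc ‖f y ψ - f x ψ‖ ≤ C * ‖ψ‖ * ‖y - x‖ :=
        hs.norm_image_sub_le_of_norm_hasDerivWithin_le (fun z hz => hf z hz ψ)
          (fun z hz => ((f' z).le_opNorm ψ).trans (by gcongr; exact bound z hz)) hx hy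
    _ = C * ‖y - x‖ * ‖ψ‖ := by ring

end OperatorFamilies

theorem inner_apply_apply_eq_of_hasDerivWithinAt_of_isSelfAdjoint
    {H : Type*} [NormedAddCommGroup H] [InnerProductSpace ℂ H] [CompleteSpace H]
    {I : Set ℝ} (hI : Convex ℝ I) {Hfam V : ℝ → H →L[ℂ] H}
    (hsa : ∀ t ∈ I, IsSelfAdjoint (Hfam t))
    (hVode : ∀ ψ : H, ∀ t ∈ I,
      HasDerivWithinAt (fun s => V s ψ) (-(Complex.I • (Hfam t (V t ψ)))) I t)
    {s t : ℝ} (hs : s ∈ I) (ht : t ∈ I) (ψ φ : H) :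
    inner ℂ (V t ψ) (V t φ) = inner ℂ (V s ψ) (V s φ) := by
  have hderiv : ∀ r ∈ I, HasDerivWithinAt (fun r => inner ℂ (V r ψ) (V r φ)) (0 : ℂ) I r := by
    intro r hr
    refine ((hVode ψ r hr).inner ℂ (hVode φ r hr)).congr_deriv ?_
    have hsym : inner ℂ (Hfam r (V r ψ)) (V r φ) = inner ℂ (V r ψ) (Hfam r (V r φ)) :=
      (hsa r hr).isSymmetric _ _
    rw [inner_neg_right, inner_neg_left, inner_smul_right, inner_smul_left, Complex.conj_I, hsym]
    ring
  simpa [sub_eq_zero] using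
    hI.norm_image_sub_le_of_norm_hasDerivWithin_le hderiv (fun _ _ => norm_zero.le) hs ht

/-- Let `Hfam : I → B(H)` be strongly continuous and pointwise self-adjoint.
Then the (unique) strong solution `V` of `V'(t) = -i Hfam(t) V(t)`, `V(t₀) = 1`, is unitary
for every `t ∈ I`. -/
theorem strong_solution_of_selfAdjoint_generator_unitary
    {H : Type*} [NormedAddCommGroup H] [InnerProductSpace ℂ H] [CompleteSpace H]
    (I : Set ℝ) (hI : I.OrdConnected) (t₀ : ℝ) (ht₀ : t₀ ∈ I)
    (Hfam : ℝ → H →L[ℂ] H)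
    (hcont : ∀ ψ : H, ContinuousOn (fun t => Hfam t ψ) I)
    (hsa : ∀ t ∈ I, IsSelfAdjoint (Hfam t))
    (V : ℝ → H →L[ℂ] H)
    (hV0 : V t₀ = 1)
    (hVode : ∀ ψ : H, ∀ t ∈ I,
      HasDerivWithinAt (fun s => V s ψ) (-(Complex.I • (Hfam t (V t ψ)))) I t) :
    ∀ t ∈ I, ContinuousLinearMap.adjoint (V t) * V t = 1 ∧
      V t * ContinuousLinearMap.adjoint (V t) = 1 := by
  have hiso : ∀ s ∈ I, adjoint (V s) * V s = 1 := fun s hs =>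
    (V s).inner_map_map_iff_adjoint_comp_self.mp fun ψ φ => by
      simpa [hV0] using
        inner_apply_apply_eq_of_hasDerivWithinAt_of_isSelfAdjoint hI.convex hsa hVode ht₀ hs ψ φ
  have hVnorm : ∀ s ∈ I, ‖V s‖ ≤ 1 := fun s hs =>
    (V s).opNorm_le_bound zero_le_one fun ψ => by
      rw [(V s).norm_map_iff_adjoint_comp_self.mpr (hiso s hs), one_mul]
  intro t ht
  have hJ : uIcc t₀ t ⊆ I := hI.uIcc_subset ht₀ ht
  obtain ⟨M, hM⟩ := isCompact_uIcc.exists_bound_of_continuousOn_apply fun ψ => (hcont ψ).mono hJ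
  have hlip := (convex_uIcc t₀ t).lipschitzOnWith_of_norm_hasDerivWithin_apply_le
    (f' := fun r => -(Complex.I • (Hfam r ∘L V r))) (C := M)
    (fun r hr ψ => (hVode ψ r (hJ hr)).mono hJ) fun r hr => by
      rw [norm_neg, norm_smul, Complex.norm_I, one_mul]
      exact (opNorm_comp_le _ _).trans <|
        (mul_le_of_le_one_right (norm_nonneg _) (hVnorm r (hJ hr))).trans (hM r hr)
  exact Unitary.mem_iff.mp <| isPreconnected_uIcc.mem_unitary_of_continuousOn hlip.continuousOn
    (fun r hr => hiso r (hJ hr)) left_mem_uIcc right_mem_uIcc (hV0 ▸ one_mem _)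
end

section
/- Let A, B : I → B(H) be strongly continuous with A pointwise self-adjoint. Then the unique strong solution V of V'(t) = −i[A(t), V(t)] + B(t), V(t₀) = V₀ satisfies ‖V(t)‖ ≤ ‖V₀‖ + ∫_{min(t,t₀)}^{max(t,t₀)} ‖B(s)‖ ds for all t ∈ I. -/
/-!
Fix `t₁` and solve the propagator equation `u' = -i A(t) u` on `[[t₀, t₁]]` backwards from
`u(t₁) = x` and from `u(t₁) = y`, calling the solutions `φ` and `ψ`. Since `-i A(t)` is
skew-adjoint, `‖φ‖` and `‖ψ‖` are constant. Along these solutions the commutator term cancels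
and `d/dt ⟪φ, V ψ⟫ = ⟪φ, B ψ⟫`, so integrating from `t₀` to `t₁` gives
`‖⟪x, V(t₁) y⟫‖ ≤ (‖V(t₀)‖ + ∫ ‖B‖) ‖x‖ ‖y‖`, and this bounds `‖V(t₁)‖`.
Only strong continuity is assumed, so the uniform bounds needed along the way come from
Banach–Steinhaus. The propagator is built by Picard iteration.
-/

open Set MeasureTheory Filter Topology Function Asymptotics
open scoped Interval InnerProductSpace

section StrongContinuity

variable {X 𝕜 E F : Type*} [TopologicalSpace X] [NontriviallyNormedField 𝕜]
  [NormedAddCommGroup E] [NormedSpace 𝕜 E] [NormedAddCommGroup F] [NormedSpace 𝕜 F]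
  {G : X → E →L[𝕜] F} {s : Set X} {u : X → E} {M : ℝ}

theorem IsCompact.exists_forall_opNorm_le_of_continuousOn_apply [CompleteSpace E]
    (hs : IsCompact s) (hG : ∀ x, ContinuousOn (fun t => G t x) s) :
    ∃ M, ∀ t ∈ s, ‖G t‖ ≤ M := by
  obtain ⟨M, hM⟩ := banach_steinhaus (g := fun t : s => G t) fun x => by
    obtain ⟨C, hC⟩ := hs.exists_bound_of_continuousOn (hG x)
    exact ⟨C, fun t => hC t t.2⟩
  exact ⟨M, fun t ht => hM ⟨t, ht⟩⟩

theorem ContinuousOn.clm_apply_of_opNorm_le (hG : ∀ x, ContinuousOn (fun t => G t x) s)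
    (hM : ∀ t ∈ s, ‖G t‖ ≤ M) (hu : ContinuousOn u s) :
    ContinuousOn (fun t => G t (u t)) s := by
  intro t₀ ht₀
  rw [ContinuousWithinAt, tendsto_iff_norm_sub_tendsto_zero]
  have hlim : Tendsto (fun t => M * ‖u t - u t₀‖ + ‖G t (u t₀) - G t₀ (u t₀)‖)
      (𝓝[s] t₀) (𝓝 0) := by
    simpa using ((tendsto_iff_norm_sub_tendsto_zero.1 (hu t₀ ht₀)).const_mul M).add
      (tendsto_iff_norm_sub_tendsto_zero.1 (hG (u t₀) t₀ ht₀))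
  refine squeeze_zero' (Eventually.of_forall fun t => norm_nonneg _) ?_ hlim
  filter_upwards [self_mem_nhdsWithin] with t ht
  calc ‖G t (u t) - G t₀ (u t₀)‖
      = ‖G t (u t - u t₀) + (G t (u t₀) - G t₀ (u t₀))‖ := by rw [map_sub]; abel_nf
    _ ≤ ‖G t‖ * ‖u t - u t₀‖ + ‖G t (u t₀) - G t₀ (u t₀)‖ :=
        (norm_add_le _ _).trans (by gcongr; exact (G t).le_opNorm _)
    _ ≤ M * ‖u t - u t₀‖ + ‖G t (u t₀) - G t₀ (u t₀)‖ := by gcongr; exact hM t ht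

theorem Continuous.clm_apply_of_opNorm_le (hG : ∀ x, Continuous fun t => G t x)
    (hM : ∀ t, ‖G t‖ ≤ M) (hu : Continuous u) : Continuous fun t => G t (u t) :=
  continuousOn_univ.1 <| .clm_apply_of_opNorm_le (fun x => (hG x).continuousOn)
    (fun t _ => hM t) hu.continuousOn

theorem IsCompact.continuousOn_clm_apply [CompleteSpace E] (hs : IsCompact s)
    (hG : ∀ x, ContinuousOn (fun t => G t x) s) (hu : ContinuousOn u s) :
    ContinuousOn (fun t => G t (u t)) s :=
  have ⟨_, hM⟩ := hs.exists_forall_opNorm_le_of_continuousOn_apply hG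
  .clm_apply_of_opNorm_le hG hM hu

end StrongContinuity

section OpNorm

variable {X 𝕜 E F : Type*} [TopologicalSpace X] [DenselyNormedField 𝕜]
  [NormedAddCommGroup E] [NormedSpace 𝕜 E] [NormedAddCommGroup F] [NormedSpace 𝕜 F]

theorem lowerSemicontinuous_opNorm_of_continuous_apply {G : X → E →L[𝕜] F}
    (hG : ∀ x, Continuous fun t => G t x) : LowerSemicontinuous fun t => ‖G t‖ := by
  have hsup : (fun t => ‖G t‖) = fun t => ⨆ x : Metric.closedBall (0 : E) 1, ‖G t x‖ := by
    ext t
    rw [← (G t).sSup_unitClosedBall_eq_norm, sSup_image']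
  rw [hsup]
  refine lowerSemicontinuous_ciSup (fun t => ⟨‖G t‖, ?_⟩) fun x => (hG x).norm.lowerSemicontinuous
  rintro - ⟨x, rfl⟩
  exact (G t).unit_le_opNorm x (mem_closedBall_zero_iff.1 x.2)

theorem integrableOn_opNorm_of_continuousOn_apply [CompleteSpace E] {G : ℝ → E →L[𝕜] F}
    {a b : ℝ} (hab : a ≤ b) (hG : ∀ x, ContinuousOn (fun t => G t x) (Icc a b)) :
    IntegrableOn (fun t => ‖G t‖) (Icc a b) := by
  obtain ⟨M, hM⟩ := isCompact_Icc.exists_forall_opNorm_le_of_continuousOn_apply hG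
  have hmeas : Measurable fun t => ‖G (projIcc a b hab t)‖ :=
    (lowerSemicontinuous_opNorm_of_continuous_apply fun x =>
      (continuousOn_iff_continuous_domRestrict.1 (hG x)).comp continuous_projIcc).measurable
  refine .of_bound measure_Icc_lt_top ?_ M
    (ae_restrict_of_forall_mem measurableSet_Icc fun t ht => by simpa using hM t ht)
  refine hmeas.aestronglyMeasurable.congr (ae_restrict_of_forall_mem measurableSet_Icc ?_)
  intro t ht
  simp only [projIcc_of_mem hab ht]

end OpNorm

theorem hasDerivWithinAt_clm_apply_of_hasDerivWithinAt_apply {𝕜 E F : Type*}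
    [NontriviallyNormedField 𝕜] [NormedAlgebra ℝ 𝕜]
    [NormedAddCommGroup E] [NormedSpace 𝕜 E] [NormedSpace ℝ E] [IsScalarTower ℝ 𝕜 E]
    [NormedAddCommGroup F] [NormedSpace 𝕜 F] [NormedSpace ℝ F] [IsScalarTower ℝ 𝕜 F]
    {V : ℝ → E →L[𝕜] F} {ψ : ℝ → E} {s : Set ℝ} {t C : ℝ} {w : F} {ψ' : E}
    (hC : ∀ τ ∈ s, ‖V τ‖ ≤ C) (hV : HasDerivWithinAt (fun τ => V τ (ψ t)) w s t)
    (hVc : ContinuousWithinAt (fun τ => V τ ψ') s t) (hψ : HasDerivWithinAt ψ ψ' s t) :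
    HasDerivWithinAt (fun τ => V τ (ψ τ)) (w + V t ψ') s t := by
  rw [hasDerivWithinAt_iff_isLittleO] at hψ hV ⊢
  -- The remainder splits as `h₁ + h₂ + (remainder of hV)`; the uniform bound on `‖V τ‖`
  -- replaces differentiability of `V` in operator norm.
  have h₁ : (fun τ => V τ (ψ τ - ψ t - (τ - t) • ψ')) =o[𝓝[s] t] fun τ => τ - t := by
    refine IsBigO.trans_isLittleO (isBigO_iff.2 ⟨C, ?_⟩) hψ
    filter_upwards [self_mem_nhdsWithin] with τ hτ
    exact (V τ).le_of_opNorm_le (hC τ hτ) _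
  have h₂ : (fun τ => (τ - t) • (V τ ψ' - V t ψ')) =o[𝓝[s] t] fun τ => τ - t := by
    have : (fun τ => V τ ψ' - V t ψ') =o[𝓝[s] t] fun _ => (1 : ℝ) :=
      (isLittleO_one_iff ℝ).2 (by simpa using hVc.tendsto.sub_const (V t ψ'))
    simpa using (isBigO_refl (fun τ : ℝ => τ - t) (𝓝[s] t)).smul_isLittleO this
  refine ((h₁.add h₂).add hV).congr' (Eventually.of_forall fun τ => ?_) EventuallyEq.rfl
  simp only [map_sub, ContinuousLinearMap.map_smul_of_tower, smul_sub, smul_add]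
  abel

theorem intervalIntegral.integral_eq_sub_of_hasDerivWithinAt_uIcc {E : Type*}
    [NormedAddCommGroup E] [NormedSpace ℝ E] [CompleteSpace E] {f g : ℝ → E} {a b : ℝ}
    (hf : ∀ t ∈ [[a, b]], HasDerivWithinAt f (g t) [[a, b]] t) (hg : ContinuousOn g [[a, b]]) :
    ∫ t in a..b, g t = f b - f a :=
  integral_eq_sub_of_hasDeriv_right (fun t ht => (hf t ht).continuousWithinAt)
    (fun t ht => ((hf t (Ioo_subset_Icc_self ht)).hasDerivAt
      (Icc_mem_nhds ht.1 ht.2)).hasDerivWithinAt) hg.intervalIntegrable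

section LinearODE

variable {𝕜 E : Type*} [NontriviallyNormedField 𝕜] [NormedAddCommGroup E] [NormedSpace 𝕜 E]
  [NormedSpace ℝ E] {a b c M : ℝ} {G : ℝ → E →L[𝕜] E}
  {T : C(Icc a b, E) → C(Icc a b, E)}

theorem dist_iterate_apply_le_of_eq_picard {χ : E} (hab : a ≤ b)
    (hG : ∀ x, Continuous fun t => G t x) (hM : ∀ t, ‖G t‖ ≤ M) (hc : c ∈ Icc a b)
    (hT : ∀ f t, T f t = ODE.picard (fun s x => G s x) c χ (IccExtend hab f) t)
    (n : ℕ) (f g : C(Icc a b, E)) (t : Icc a b) :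
    dist (T^[n] f t) (T^[n] g t) ≤ (M * |t - c|) ^ n / n.factorial * dist f g := by
  have hcont (f : C(Icc a b, E)) : Continuous fun s => G s (IccExtend hab f s) :=
    .clm_apply_of_opNorm_le hG hM f.continuous.Icc_extend'
  induction n generalizing t with
  | zero => simpa using ContinuousMap.dist_apply_le_dist t
  | succ n ih =>
    rw [iterate_succ_apply', iterate_succ_apply', dist_eq_norm, hT, hT, ODE.picard_apply,
      ODE.picard_apply, add_sub_add_left_eq_sub,
      ← intervalIntegral.integral_sub ((hcont _).intervalIntegrable _ _)
        ((hcont _).intervalIntegrable _ _), intervalIntegral.norm_intervalIntegral_eq]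
    calc _ ≤ ∫ s in Ι c t, M ^ (n + 1) / n.factorial * dist f g * |s - c| ^ n := by
          refine norm_integral_le_of_norm_le (Continuous.integrableOn_uIoc (by fun_prop))
            (ae_restrict_of_forall_mem measurableSet_uIoc fun s hs => ?_)
          have hs' : s ∈ Icc a b := uIoc_subset_uIcc.trans (uIcc_subset_Icc hc t.2) hs
          rw [← map_sub, IccExtend_of_mem hab _ hs', IccExtend_of_mem hab _ hs']
          calc ‖G s (T^[n] f ⟨s, hs'⟩ - T^[n] g ⟨s, hs'⟩)‖
              ≤ M * dist (T^[n] f ⟨s, hs'⟩) (T^[n] g ⟨s, hs'⟩) := by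
                rw [dist_eq_norm]
                exact (G s).le_of_opNorm_le (hM s) _
            _ ≤ M * ((M * |s - c|) ^ n / n.factorial * dist f g) := by
                gcongr
                · exact (norm_nonneg _).trans (hM s)
                · exact ih ⟨s, hs'⟩
            _ = M ^ (n + 1) / n.factorial * dist f g * |s - c| ^ n := by ring
      _ = (M * |t - c|) ^ (n + 1) / (n + 1).factorial * dist f g := by
          rw [integral_const_mul, integral_pow_abs_sub_uIoc, Nat.factorial_succ]
          push_cast
          field_simp
          ring

theorem exists_contractingWith_iterate_of_eq_picard {χ : E} (hab : a ≤ b)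
    (hG : ∀ x, Continuous fun t => G t x) (hM : ∀ t, ‖G t‖ ≤ M) (hc : c ∈ Icc a b)
    (hT : ∀ f t, T f t = ODE.picard (fun s x => G s x) c χ (IccExtend hab f) t) :
    ∃ (n : ℕ) (K : NNReal), ContractingWith K T^[n] := by
  obtain ⟨n, hn⟩ := ((FloorSemiring.tendsto_pow_div_factorial_atTop (M * (b - a))).eventually
    (gt_mem_nhds one_pos)).exists
  have hM0 : 0 ≤ M := (norm_nonneg _).trans (hM a)
  have hK : 0 ≤ (M * (b - a)) ^ n / n.factorial := by have := sub_nonneg.2 hab; positivity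
  refine ⟨n, .mk _ hK, hn, LipschitzWith.of_dist_le_mul fun f g => ?_⟩
  rw [NNReal.coe_mk, ContinuousMap.dist_le (by positivity)]
  intro t
  refine (dist_iterate_apply_le_of_eq_picard hab hG hM hc hT n f g t).trans ?_
  have : |(t : ℝ) - c| ≤ b - a :=
    abs_sub_le_iff.2 ⟨by linarith [t.2.2, hc.1], by linarith [t.2.1, hc.2]⟩
  gcongr

theorem exists_eq_forall_mem_Icc_hasDerivWithinAt_clm_apply_of_opNorm_le [CompleteSpace E]
    (hab : a ≤ b) (hG : ∀ x, Continuous fun t => G t x) (hM : ∀ t, ‖G t‖ ≤ M)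
    (hc : c ∈ Icc a b) (χ : E) :
    ∃ u : ℝ → E, u c = χ ∧ ∀ t ∈ Icc a b, HasDerivWithinAt u (G t (u t)) (Icc a b) t := by
  have hcont (f : C(Icc a b, E)) : Continuous fun s => G s (IccExtend hab f s) :=
    .clm_apply_of_opNorm_le hG hM f.continuous.Icc_extend'
  let T (f : C(Icc a b, E)) : C(Icc a b, E) :=
    ⟨fun t => ODE.picard (fun s x => G s x) c χ (IccExtend hab f) t,
      continuous_const.add <| (intervalIntegral.continuous_primitive
        (fun _ _ => (hcont f).intervalIntegrable _ _) c).comp continuous_subtype_val⟩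
  obtain ⟨n, K, hK⟩ := exists_contractingWith_iterate_of_eq_picard hab hG hM hc
    (T := T) fun _ _ => rfl
  set w := hK.fixedPoint T^[n]
  have hfix : T w = w := hK.isFixedPt_fixedPoint_iterate
  have hw : ∀ t ∈ Icc a b,
      IccExtend hab w t = ODE.picard (fun s x => G s x) c χ (IccExtend hab w) t := by
    intro t ht
    rw [IccExtend_of_mem hab _ ht]
    exact (congrArg (· ⟨t, ht⟩) hfix).symm
  refine ⟨ODE.picard (fun s x => G s x) c χ (IccExtend hab w), ODE.picard_apply₀,
    fun t ht => ?_⟩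
  have := (((hcont w).integral_hasStrictDerivAt c t).hasDerivAt.const_add χ).hasDerivWithinAt
    (s := Icc a b)
  rwa [hw t ht] at this

theorem exists_eq_forall_mem_Icc_hasDerivWithinAt_clm_apply [CompleteSpace E] (hab : a ≤ b)
    (hG : ∀ x, ContinuousOn (fun t => G t x) (Icc a b)) (hc : c ∈ Icc a b) (χ : E) :
    ∃ u : ℝ → E, u c = χ ∧ ∀ t ∈ Icc a b, HasDerivWithinAt u (G t (u t)) (Icc a b) t := by
  obtain ⟨M, hM⟩ := isCompact_Icc.exists_forall_opNorm_le_of_continuousOn_apply hG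
  obtain ⟨u, hu₀, hu⟩ := exists_eq_forall_mem_Icc_hasDerivWithinAt_clm_apply_of_opNorm_le hab
    (G := fun t => G (projIcc a b hab t))
    (fun x => (continuousOn_iff_continuous_domRestrict.1 (hG x)).comp continuous_projIcc)
    (fun t => hM _ (projIcc a b hab t).2) hc χ
  exact ⟨u, hu₀, fun t ht => by simpa [projIcc_of_mem hab ht] using hu t ht⟩

end LinearODE

section InnerProduct

variable {𝕜 E F : Type*} [RCLike 𝕜] [SeminormedAddCommGroup E] [NormedSpace 𝕜 E]
  [NormedAddCommGroup F] [InnerProductSpace 𝕜 F]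

theorem ContinuousLinearMap.norm_inner_apply_le (T : E →L[𝕜] F) (x : F) (y : E) :
    ‖⟪x, T y⟫_𝕜‖ ≤ ‖T‖ * (‖x‖ * ‖y‖) :=
  (norm_inner_le_norm _ _).trans <| by rw [mul_left_comm]; gcongr; exact T.le_opNorm y

theorem ContinuousLinearMap.opNorm_le_of_norm_inner_le (T : E →L[𝕜] F) {K : ℝ} (hK : 0 ≤ K)
    (h : ∀ x y, ‖⟪x, T y⟫_𝕜‖ ≤ K * (‖x‖ * ‖y‖)) : ‖T‖ ≤ K := by
  refine T.opNorm_le_bound hK fun y => ?_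
  have hy := h (T y) y
  rw [inner_self_eq_norm_sq_to_K, norm_pow, RCLike.norm_ofReal, abs_norm] at hy
  rcases (norm_nonneg (T y)).eq_or_lt with h0 | hpos
  · rw [← h0]; positivity
  · nlinarith

end InnerProduct

section CommutatorEquation

open Complex (I)

variable {H : Type*} [NormedAddCommGroup H] [InnerProductSpace ℂ H] [CompleteSpace H]

theorem IsSelfAdjoint.inner_I_smul_apply_left {T : H →L[ℂ] H} (hT : IsSelfAdjoint T)
    (x y : H) : ⟪I • T x, y⟫_ℂ = -⟪x, I • T y⟫_ℂ := by
  have h := hT.isSymmetric x y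
  simp only [ContinuousLinearMap.coe_coe] at h
  rw [inner_smul_left, inner_smul_right, Complex.conj_I, h]
  ring

theorem norm_eq_of_hasDerivWithinAt_neg_I_smul {s : Set ℝ} (hs : Convex ℝ s)
    {A : ℝ → H →L[ℂ] H} (hA : ∀ t ∈ s, IsSelfAdjoint (A t)) {u : ℝ → H}
    (hu : ∀ t ∈ s, HasDerivWithinAt u (-(I • A t (u t))) s t) {t t' : ℝ} (ht : t ∈ s)
    (ht' : t' ∈ s) : ‖u t‖ = ‖u t'‖ := by
  have hderiv : ∀ τ ∈ s, HasDerivWithinAt (fun τ => ⟪u τ, u τ⟫_ℂ) 0 s τ := by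
    intro τ hτ
    refine ((hu τ hτ).inner ℂ (hu τ hτ)).congr_deriv ?_
    rw [inner_neg_left, inner_neg_right, (hA τ hτ).inner_I_smul_apply_left]
    ring
  have h := hs.norm_image_sub_le_of_norm_hasDerivWithin_le hderiv (fun _ _ => norm_zero.le) ht' ht
  rw [zero_mul, norm_le_zero_iff, sub_eq_zero, inner_self_eq_norm_sq_to_K,
    inner_self_eq_norm_sq_to_K] at h
  norm_cast at h
  exact (pow_left_inj₀ (norm_nonneg _) (norm_nonneg _) two_ne_zero).1 h

theorem hasDerivWithinAt_inner_apply_of_commutator {A B : H →L[ℂ] H} {V : ℝ → H →L[ℂ] H}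
    {φ ψ : ℝ → H} {s : Set ℝ} {t C : ℝ} (hA : IsSelfAdjoint A) (hC : ∀ τ ∈ s, ‖V τ‖ ≤ C)
    (hV : ∀ x, HasDerivWithinAt (fun τ => V τ x) (-(I • (A * V t - V t * A) x) + B x) s t)
    (hφ : HasDerivWithinAt φ (-(I • A (φ t))) s t)
    (hψ : HasDerivWithinAt ψ (-(I • A (ψ t))) s t) :
    HasDerivWithinAt (fun τ => ⟪φ τ, V τ (ψ τ)⟫_ℂ) ⟪φ t, B (ψ t)⟫_ℂ s t := by
  have hVψ := hasDerivWithinAt_clm_apply_of_hasDerivWithinAt_apply hC (hV (ψ t))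
    (hV _).continuousWithinAt hψ
  refine (hφ.inner ℂ hVψ).congr_deriv ?_
  simp only [sub_apply, mul_apply_eq_comp, map_neg, map_smul,
    inner_add_right, inner_sub_right, inner_neg_left, inner_neg_right, inner_smul_right,
    hA.inner_I_smul_apply_left]
  ring

theorem inner_apply_sub_eq_integral_of_commutator {A B V : ℝ → H →L[ℂ] H} {φ ψ : ℝ → H}
    {t₀ t₁ : ℝ} (hB : ∀ x, ContinuousOn (fun t => B t x) [[t₀, t₁]])
    (hsa : ∀ t ∈ [[t₀, t₁]], IsSelfAdjoint (A t))
    (hV : ∀ x, ∀ t ∈ [[t₀, t₁]], HasDerivWithinAt (fun s => V s x)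
      (-(I • (A t * V t - V t * A t) x) + B t x) [[t₀, t₁]] t)
    (hφ : ∀ t ∈ [[t₀, t₁]], HasDerivWithinAt φ (-(I • A t (φ t))) [[t₀, t₁]] t)
    (hψ : ∀ t ∈ [[t₀, t₁]], HasDerivWithinAt ψ (-(I • A t (ψ t))) [[t₀, t₁]] t) :
    ⟪φ t₁, V t₁ (ψ t₁)⟫_ℂ - ⟪φ t₀, V t₀ (ψ t₀)⟫_ℂ = ∫ t in t₀..t₁, ⟪φ t, B t (ψ t)⟫_ℂ := by
  obtain ⟨C, hC⟩ := isCompact_uIcc.exists_forall_opNorm_le_of_continuousOn_apply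
    fun x t ht => (hV x t ht).continuousWithinAt
  refine (intervalIntegral.integral_eq_sub_of_hasDerivWithinAt_uIcc (fun t ht =>
    hasDerivWithinAt_inner_apply_of_commutator (hsa t ht) hC (hV · t ht) (hφ t ht) (hψ t ht))
    ?_).symm
  have hφc : ContinuousOn φ [[t₀, t₁]] := fun t ht => (hφ t ht).continuousWithinAt
  exact hφc.inner <|
    isCompact_uIcc.continuousOn_clm_apply hB fun t ht => (hψ t ht).continuousWithinAt

theorem norm_le_norm_add_integral_of_commutator {A B V : ℝ → H →L[ℂ] H} {t₀ t₁ : ℝ}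
    (hA : ∀ x, ContinuousOn (fun t => A t x) [[t₀, t₁]])
    (hB : ∀ x, ContinuousOn (fun t => B t x) [[t₀, t₁]])
    (hsa : ∀ t ∈ [[t₀, t₁]], IsSelfAdjoint (A t))
    (hV : ∀ x, ∀ t ∈ [[t₀, t₁]], HasDerivWithinAt (fun s => V s x)
      (-(I • (A t * V t - V t * A t) x) + B t x) [[t₀, t₁]] t) :
    ‖V t₁‖ ≤ ‖V t₀‖ + ∫ t in Ι t₀ t₁, ‖B t‖ := by
  have hB_int : IntegrableOn (fun t => ‖B t‖) (Ι t₀ t₁) :=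
    (integrableOn_opNorm_of_continuousOn_apply inf_le_sup hB).mono_set uIoc_subset_uIcc
  have hK : 0 ≤ ‖V t₀‖ + ∫ t in Ι t₀ t₁, ‖B t‖ :=
    add_nonneg (norm_nonneg _) (setIntegral_nonneg measurableSet_uIoc fun _ _ => norm_nonneg _)
  refine (V t₁).opNorm_le_of_norm_inner_le hK fun x y => ?_
  have hG : ∀ z, ContinuousOn (fun t => (-(I • A t)) z) [[t₀, t₁]] := fun z =>
    ((hA z).const_smul I).neg
  obtain ⟨φ, hφ₁, hφ⟩ := exists_eq_forall_mem_Icc_hasDerivWithinAt_clm_apply inf_le_sup hG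
    right_mem_uIcc x
  obtain ⟨ψ, hψ₁, hψ⟩ := exists_eq_forall_mem_Icc_hasDerivWithinAt_clm_apply inf_le_sup hG
    right_mem_uIcc y
  simp only [neg_apply, smul_apply] at hφ hψ
  have hφ_norm (t) (ht : t ∈ [[t₀, t₁]]) : ‖φ t‖ = ‖x‖ :=
    hφ₁ ▸ norm_eq_of_hasDerivWithinAt_neg_I_smul (convex_uIcc t₀ t₁) hsa hφ ht right_mem_uIcc
  have hψ_norm (t) (ht : t ∈ [[t₀, t₁]]) : ‖ψ t‖ = ‖y‖ :=
    hψ₁ ▸ norm_eq_of_hasDerivWithinAt_neg_I_smul (convex_uIcc t₀ t₁) hsa hψ ht right_mem_uIcc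
  have hdiff := inner_apply_sub_eq_integral_of_commutator hB hsa hV hφ hψ
  rw [hφ₁, hψ₁, sub_eq_iff_eq_add'] at hdiff
  rw [hdiff, add_mul]
  refine (norm_add_le _ _).trans (add_le_add ?_ ?_)
  · simpa only [hφ_norm t₀ left_mem_uIcc, hψ_norm t₀ left_mem_uIcc] using
      (V t₀).norm_inner_apply_le (φ t₀) (ψ t₀)
  · rw [intervalIntegral.norm_intervalIntegral_eq, ← integral_mul_const]
    refine norm_integral_le_of_norm_le (hB_int.mul_const _)
      (ae_restrict_of_forall_mem measurableSet_uIoc fun t ht => ?_)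
    have ht' : t ∈ [[t₀, t₁]] := uIoc_subset_uIcc ht
    simpa only [hφ_norm t ht', hψ_norm t ht'] using (B t).norm_inner_apply_le (φ t) (ψ t)

end CommutatorEquation

/-- Let `A, B : I → B(H)` be strongly continuous with `A` pointwise
self-adjoint.  Then the (unique) strong solution `V` of `V'(t) = -i[A(t),V(t)] + B(t)`,
`V(t₀) = V₀`, satisfies `‖V(t)‖ ≤ ‖V₀‖ + ∫_{min(t,t₀)}^{max(t,t₀)} ‖B(s)‖ ds` for all
`t ∈ I`. -/
theorem norm_bound_for_commutator_equation
    {H : Type*} [NormedAddCommGroup H] [InnerProductSpace ℂ H] [CompleteSpace H]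
    (I : Set ℝ) (hI : I.OrdConnected) (t₀ : ℝ) (ht₀ : t₀ ∈ I)
    (A B : ℝ → H →L[ℂ] H)
    (hA : ∀ ψ : H, ContinuousOn (fun t => A t ψ) I)
    (hB : ∀ ψ : H, ContinuousOn (fun t => B t ψ) I)
    (hsa : ∀ t ∈ I, IsSelfAdjoint (A t))
    (V₀ : H →L[ℂ] H) (V : ℝ → H →L[ℂ] H)
    (hV0 : V t₀ = V₀)
    (hVode : ∀ ψ : H, ∀ t ∈ I,
      HasDerivWithinAt (fun s => V s ψ)
        (-(Complex.I • ((A t * V t - V t * A t) ψ)) + B t ψ) I t) :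
    ∀ t ∈ I, ‖V t‖ ≤ ‖V₀‖ + ∫ s in min t₀ t..max t₀ t, ‖B s‖ := by
  intro t ht
  have hJ : [[t₀, t]] ⊆ I := hI.uIcc_subset ht₀ ht
  have h := norm_le_norm_add_integral_of_commutator (fun x => (hA x).mono hJ)
    (fun x => (hB x).mono hJ) (fun s hs => hsa s (hJ hs))
    (fun x s hs => (hVode x s (hJ hs)).mono hJ)
  rwa [← hV0, intervalIntegral.integral_of_le min_le_max]
end

section
/- Let F be an F-function on a countable metric space (Γ,d) and g : [0,∞) → [0,∞) a non-decreasing subadditive function. Then F_g(r) := e^{−g(r)} F(r) is again an F-function on (Γ,d), with ‖F_g‖ ≤ ‖F‖ and convolution constant C_{F_g} ≤ C_F. -/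
open scoped ENNReal

/-- Let `F` be an F-function on a countable metric space `(Γ,d)` (positive,
non-increasing, uniformly integrable with bound `nF = ‖F‖`, convolution condition with
constant `cF`) and let `g : [0,∞) → [0,∞)` be non-decreasing and subadditive.  Then
`F_g(r) = e^{-g(r)} F(r)` is again an F-function on `(Γ,d)`, with `‖F_g‖ ≤ ‖F‖` and
convolution constant `C_{F_g} ≤ C_F`. -/
theorem weighted_FFunction
    {Γ : Type*} [MetricSpace Γ] [Countable Γ]
    (F : ℝ → ℝ)
    (hFpos : ∀ r : ℝ, 0 ≤ r → 0 < F r)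
    (hFanti : ∀ r s : ℝ, 0 ≤ r → r ≤ s → F s ≤ F r)
    (nF cF : ℝ)
    (hFint : ∀ x : Γ, ∑' y : Γ, ENNReal.ofReal (F (dist x y)) ≤ ENNReal.ofReal nF)
    (hFconv : ∀ x y : Γ, ∑' z : Γ,
        ENNReal.ofReal (F (dist x z)) * ENNReal.ofReal (F (dist z y))
          ≤ ENNReal.ofReal (cF * F (dist x y)))
    (g : ℝ → ℝ)
    (hg0 : ∀ r : ℝ, 0 ≤ r → 0 ≤ g r)
    (hgmono : ∀ r s : ℝ, 0 ≤ r → r ≤ s → g r ≤ g s)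
    (hgsub : ∀ r s : ℝ, 0 ≤ r → 0 ≤ s → g (r + s) ≤ g r + g s) :
    (∀ r : ℝ, 0 ≤ r → 0 < Real.exp (-g r) * F r) ∧
    (∀ r s : ℝ, 0 ≤ r → r ≤ s → Real.exp (-g s) * F s ≤ Real.exp (-g r) * F r) ∧
    (∀ x : Γ, ∑' y : Γ, ENNReal.ofReal (Real.exp (-g (dist x y)) * F (dist x y))
        ≤ ENNReal.ofReal nF) ∧
    (∀ x y : Γ, ∑' z : Γ,
        ENNReal.ofReal (Real.exp (-g (dist x z)) * F (dist x z)) *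
          ENNReal.ofReal (Real.exp (-g (dist z y)) * F (dist z y))
        ≤ ENNReal.ofReal (cF * (Real.exp (-g (dist x y)) * F (dist x y)))) := by

  refine ⟨?_, ?_, ?_, ?_⟩
  · intro r hr
    exact mul_pos (Real.exp_pos _) (hFpos r hr)
  · intro r s hr hrs
    have h1 : Real.exp (-g s) ≤ Real.exp (-g r) :=
      Real.exp_le_exp.mpr (neg_le_neg (hgmono r s hr hrs))
    exact mul_le_mul h1 (hFanti r s hr hrs) (hFpos s (hr.trans hrs)).le
      (Real.exp_pos _).le
  · intro x
    refine le_trans (ENNReal.tsum_le_tsum fun y => ?_) (hFint x)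
    apply ENNReal.ofReal_le_ofReal
    calc Real.exp (-g (dist x y)) * F (dist x y)
        ≤ 1 * F (dist x y) := by
          apply mul_le_mul_of_nonneg_right _ (hFpos _ dist_nonneg).le
          exact Real.exp_le_one_iff.mpr (neg_nonpos.mpr (hg0 _ dist_nonneg))
      _ = F (dist x y) := one_mul _
  · intro x y
    have key : ∀ z : Γ,
        ENNReal.ofReal (Real.exp (-g (dist x z)) * F (dist x z)) *
          ENNReal.ofReal (Real.exp (-g (dist z y)) * F (dist z y))
        ≤ ENNReal.ofReal (Real.exp (-g (dist x y))) *
            (ENNReal.ofReal (F (dist x z)) * ENNReal.ofReal (F (dist z y))) := by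
      intro z
      rw [← ENNReal.ofReal_mul (mul_nonneg (Real.exp_pos (-g (dist x z))).le
          (hFpos _ dist_nonneg).le),
        ← ENNReal.ofReal_mul (hFpos (dist x z) dist_nonneg).le,
        ← ENNReal.ofReal_mul (Real.exp_pos _).le]
      apply ENNReal.ofReal_le_ofReal
      have hexp : Real.exp (-g (dist x z)) * Real.exp (-g (dist z y))
          ≤ Real.exp (-g (dist x y)) := by
        rw [← Real.exp_add]
        apply Real.exp_le_exp.mpr
        rw [← neg_add]
        apply neg_le_neg
        calc g (dist x y) ≤ g (dist x z + dist z y) :=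
              hgmono _ _ dist_nonneg (dist_triangle x z y)
          _ ≤ g (dist x z) + g (dist z y) := hgsub _ _ dist_nonneg dist_nonneg
      calc Real.exp (-g (dist x z)) * F (dist x z) *
            (Real.exp (-g (dist z y)) * F (dist z y))
          = (Real.exp (-g (dist x z)) * Real.exp (-g (dist z y))) *
              (F (dist x z) * F (dist z y)) := by ring
        _ ≤ Real.exp (-g (dist x y)) * (F (dist x z) * F (dist z y)) :=
            mul_le_mul_of_nonneg_right hexp
              (mul_nonneg (hFpos _ dist_nonneg).le (hFpos _ dist_nonneg).le)
    calc ∑' z : Γ, ENNReal.ofReal (Real.exp (-g (dist x z)) * F (dist x z)) *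
            ENNReal.ofReal (Real.exp (-g (dist z y)) * F (dist z y))
        ≤ ∑' z : Γ, ENNReal.ofReal (Real.exp (-g (dist x y))) *
            (ENNReal.ofReal (F (dist x z)) * ENNReal.ofReal (F (dist z y))) :=
          ENNReal.tsum_le_tsum key
      _ = ENNReal.ofReal (Real.exp (-g (dist x y))) *
            ∑' z : Γ, ENNReal.ofReal (F (dist x z)) * ENNReal.ofReal (F (dist z y)) :=
          ENNReal.tsum_mul_left
      _ ≤ ENNReal.ofReal (Real.exp (-g (dist x y))) *
            ENNReal.ofReal (cF * F (dist x y)) :=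
          mul_le_mul_right (hFconv x y) _
      _ = ENNReal.ofReal (cF * (Real.exp (-g (dist x y)) * F (dist x y))) := by
          rw [← ENNReal.ofReal_mul (Real.exp_pos _).le]
          congr 1; ring
end

section
/- Let H₁, H₂ be complex Hilbert spaces and ρ a normal state on B(H₂). Then Π_ρ = id ⊗ ρ : B(H₁⊗H₂) → B(H₁), restricted to any bounded subset of its domain, is continuous when both domain and codomain carry the strong operator topology. -/
open Filter Topology

/-!
The estimate `|⟨η, Π_ρ(b) φ⟩| ≤ ‖η‖ ∑ₙ wₙ ‖b (φ ⊗ ξₙ)‖` gives `‖Π_ρ(b) φ‖ ≤ ∑ₙ wₙ ‖b (φ ⊗ ξₙ)‖`.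
Applied to `b = Aα - a`, each term tends to `0` by strong convergence, and the terms are
dominated by `wₙ (M + ‖a‖) ‖φ‖`, a summable sequence; so the sum tends to `0` by dominated
convergence for series (Tannery's theorem).
-/

section

variable {𝕜 E F G : Type*} [RCLike 𝕜]
  [NormedAddCommGroup E] [InnerProductSpace 𝕜 E]
  [NormedAddCommGroup F] [InnerProductSpace 𝕜 F]
  [NormedAddCommGroup G] [InnerProductSpace 𝕜 G]

theorem norm_le_of_forall_norm_inner_le {y : E} {C : ℝ} (hC : 0 ≤ C)
    (h : ∀ η : E, ‖(inner 𝕜 η y : 𝕜)‖ ≤ C * ‖η‖) : ‖y‖ ≤ C := by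
  rw [← innerSL_apply_norm 𝕜]
  refine ContinuousLinearMap.opNorm_le_bound _ hC fun η => ?_
  simpa only [innerSL_apply_apply, norm_inner_symm] using h η

theorem norm_tmul_of_inner_tmul (tmul : E →ₗ[𝕜] F →ₗ[𝕜] G)
    (hinner : ∀ (a c : E) (b d : F),
      (inner 𝕜 (tmul a b) (tmul c d) : 𝕜) = (inner 𝕜 a c : 𝕜) * (inner 𝕜 b d : 𝕜))
    (x : E) (y : F) : ‖tmul x y‖ = ‖x‖ * ‖y‖ := by
  have h := hinner x x y y
  simp only [inner_self_eq_norm_sq_to_K] at h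
  have h' : ‖tmul x y‖ ^ 2 = (‖x‖ * ‖y‖) ^ 2 := by
    rw [mul_pow]; exact_mod_cast h
  exact (sq_eq_sq₀ (norm_nonneg _) (by positivity)).mp h'

theorem norm_le_tsum_of_hasSum_inner {β : Type*} (tmul : E →ₗ[𝕜] F →ₗ[𝕜] G)
    (hinner : ∀ (a c : E) (b d : F),
      (inner 𝕜 (tmul a b) (tmul c d) : 𝕜) = (inner 𝕜 a c : 𝕜) * (inner 𝕜 b d : 𝕜))
    {ξ : β → F} (hξ : ∀ n, ‖ξ n‖ = 1) {w : β → ℝ} (hw : ∀ n, 0 ≤ w n) (hw_sum : Summable w)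
    (b : G →L[𝕜] G) (φ y : E)
    (hy : ∀ η : E, HasSum (fun n => (w n : 𝕜) * (inner 𝕜 (tmul η (ξ n)) (b (tmul φ (ξ n))) : 𝕜))
      (inner 𝕜 η y : 𝕜)) :
    ‖y‖ ≤ ∑' n, w n * ‖b (tmul φ (ξ n))‖ := by
  have hnorm : ∀ x n, ‖tmul x (ξ n)‖ = ‖x‖ := fun x n => by
    rw [norm_tmul_of_inner_tmul tmul hinner, hξ, mul_one]
  have hsum : Summable fun n => w n * ‖b (tmul φ (ξ n))‖ := by
    refine hw_sum.mul_right (‖b‖ * ‖φ‖) |>.of_nonneg_of_le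
      (fun n => mul_nonneg (hw n) (norm_nonneg _)) fun n => ?_
    refine mul_le_mul_of_nonneg_left ?_ (hw n)
    simpa only [hnorm] using b.le_opNorm (tmul φ (ξ n))
  refine norm_le_of_forall_norm_inner_le (𝕜 := 𝕜) (tsum_nonneg fun n =>
    mul_nonneg (hw n) (norm_nonneg _)) fun η => ?_
  rw [← tsum_mul_right]
  refine (hy η).norm_le_of_bounded (hsum.mul_right ‖η‖).hasSum fun n => ?_
  calc ‖(w n : 𝕜) * (inner 𝕜 (tmul η (ξ n)) (b (tmul φ (ξ n))) : 𝕜)‖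
      ≤ w n * (‖tmul η (ξ n)‖ * ‖b (tmul φ (ξ n))‖) := by
        rw [norm_mul, RCLike.norm_ofReal, abs_of_nonneg (hw n)]
        exact mul_le_mul_of_nonneg_left (norm_inner_le_norm _ _) (hw n)
    _ = w n * ‖b (tmul φ (ξ n))‖ * ‖η‖ := by rw [hnorm]; ring

end

theorem tendsto_tsum_mul_norm_of_tendsto_zero {ι β V : Type*} [SeminormedAddCommGroup V]
    {l : Filter ι} {w : β → ℝ} (hw : ∀ n, 0 ≤ w n) (hw_sum : Summable w) {f : ι → β → V} {C : ℝ}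
    (hf_bdd : ∀ i n, ‖f i n‖ ≤ C) (hf : ∀ n, Tendsto (f · n) l (𝓝 0)) :
    Tendsto (fun i => ∑' n, w n * ‖f i n‖) l (𝓝 0) := by
  have key := tendsto_tsum_of_dominated_convergence (f := fun i n => w n * ‖f i n‖)
    (hw_sum.mul_right C) (fun n => (hf n).norm.const_mul (w n))
    (Eventually.of_forall fun i n => ?_)
  · simpa using key
  · rw [Real.norm_eq_abs, abs_of_nonneg (mul_nonneg (hw n) (norm_nonneg _))]
    exact mul_le_mul_of_nonneg_left (hf_bdd i n) (hw n)

theorem partial_state_strong_continuity_on_bounded_sets_general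
    {H₁ H₂ HK : Type*}
    [NormedAddCommGroup H₁] [InnerProductSpace ℂ H₁]
    [NormedAddCommGroup H₂] [InnerProductSpace ℂ H₂]
    [NormedAddCommGroup HK] [InnerProductSpace ℂ HK]
    (tmul : H₁ →ₗ[ℂ] H₂ →ₗ[ℂ] HK)
    (hinner : ∀ (a c : H₁) (b d : H₂),
      (inner ℂ (tmul a b) (tmul c d) : ℂ) = (inner ℂ a c : ℂ) * (inner ℂ b d : ℂ))
    (ξ : ℕ → H₂) (hξ : Orthonormal ℂ ξ)
    (w : ℕ → ℝ) (hw : ∀ n, 0 ≤ w n) (hwsum : HasSum w 1)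
    (Pρ : (HK →L[ℂ] HK) →ₗ[ℂ] (H₁ →L[ℂ] H₁))
    (hP : ∀ (a : HK →L[ℂ] HK) (η φ : H₁),
      HasSum (fun n : ℕ => (w n : ℂ) * (inner ℂ (tmul η (ξ n)) (a (tmul φ (ξ n))) : ℂ))
        (inner ℂ η (Pρ a φ) : ℂ))
    {ι : Type*} (l : Filter ι) (Aα : ι → HK →L[ℂ] HK) (a : HK →L[ℂ] HK) (M : ℝ)
    (hbdd : ∀ i, ‖Aα i‖ ≤ M)
    (hconv : ∀ ζ : HK, Filter.Tendsto (fun i => Aα i ζ) l (nhds (a ζ)))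
    (φ : H₁) :
    Filter.Tendsto (fun i => Pρ (Aα i) φ) l (nhds (Pρ a φ)) := by
  have hdiff_bdd : ∀ i n, ‖(Aα i - a) (tmul φ (ξ n))‖ ≤ (M + ‖a‖) * ‖φ‖ := fun i n =>
    calc ‖(Aα i - a) (tmul φ (ξ n))‖ ≤ ‖Aα i - a‖ * ‖tmul φ (ξ n)‖ := (Aα i - a).le_opNorm _
      _ ≤ (M + ‖a‖) * ‖φ‖ := by
        rw [norm_tmul_of_inner_tmul tmul hinner, hξ.1 n, mul_one]
        gcongr
        exact (norm_sub_le _ _).trans (by gcongr; exact hbdd i)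
  have hdiff : ∀ n, Tendsto (fun i => (Aα i - a) (tmul φ (ξ n))) l (𝓝 0) := fun n => by
    simpa only [sub_apply, sub_self] using
      (hconv (tmul φ (ξ n))).sub_const (a (tmul φ (ξ n)))
  rw [tendsto_iff_norm_sub_tendsto_zero]
  refine squeeze_zero (fun _ => norm_nonneg _) (fun i => ?_)
    (tendsto_tsum_mul_norm_of_tendsto_zero hw hwsum.summable hdiff_bdd hdiff)
  rw [← sub_apply, ← map_sub]
  exact norm_le_tsum_of_hasSum_inner tmul hinner hξ.1 hw hwsum.summable _ φ _ (hP _ · φ)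

/-- Let `H₁, H₂` be complex Hilbert spaces, `HK` their Hilbert tensor
product (presented by `tmul`), and `ρ` a *normal* state on `B(H₂)`, given by a density matrix
with orthonormal eigenvectors `ξ n` and nonnegative weights `w n` summing to `1`.  Let
`Pρ = id ⊗ ρ : B(H₁⊗H₂) → B(H₁)` be the corresponding map, characterized by its matrix
elements `⟨η, Pρ(a) φ⟩ = ∑ₙ w n ⟨η ⊗ ξ n, a (φ ⊗ ξ n)⟩`.  Then `Pρ`, restricted to any
bounded subset of its domain, is continuous for the strong operator topologies: for every
norm-bounded net `Aα` converging strongly to `a`, `Pρ(Aα)` converges strongly to `Pρ(a)`. -/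
theorem partial_state_strong_continuity_on_bounded_sets
    {H₁ H₂ HK : Type*}
    [NormedAddCommGroup H₁] [InnerProductSpace ℂ H₁] [CompleteSpace H₁]
    [NormedAddCommGroup H₂] [InnerProductSpace ℂ H₂] [CompleteSpace H₂]
    [NormedAddCommGroup HK] [InnerProductSpace ℂ HK] [CompleteSpace HK]
    (tmul : H₁ →ₗ[ℂ] H₂ →ₗ[ℂ] HK)
    (hinner : ∀ (a c : H₁) (b d : H₂),
      (inner ℂ (tmul a b) (tmul c d) : ℂ) = (inner ℂ a c : ℂ) * (inner ℂ b d : ℂ))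
    (hdense : Dense ((Submodule.span ℂ {z : HK | ∃ a b, z = tmul a b} :
        Submodule ℂ HK) : Set HK))
    (ξ : ℕ → H₂) (hξ : Orthonormal ℂ ξ)
    (w : ℕ → ℝ) (hw : ∀ n, 0 ≤ w n) (hwsum : HasSum w 1)
    (Pρ : (HK →L[ℂ] HK) →ₗ[ℂ] (H₁ →L[ℂ] H₁))
    (hP : ∀ (a : HK →L[ℂ] HK) (η φ : H₁),
      HasSum (fun n : ℕ => (w n : ℂ) * (inner ℂ (tmul η (ξ n)) (a (tmul φ (ξ n))) : ℂ))
        (inner ℂ η (Pρ a φ) : ℂ))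
    {ι : Type*} (l : Filter ι) (Aα : ι → HK →L[ℂ] HK) (a : HK →L[ℂ] HK) (M : ℝ)
    (hbdd : ∀ i, ‖Aα i‖ ≤ M)
    (hconv : ∀ ζ : HK, Filter.Tendsto (fun i => Aα i ζ) l (nhds (a ζ)))
    (φ : H₁) :
    Filter.Tendsto (fun i => Pρ (Aα i) φ) l (nhds (Pρ a φ)) :=
  partial_state_strong_continuity_on_bounded_sets_general tmul hinner ξ hξ w hw hwsum Pρ hP l Aα a M
    hbdd hconv φ
end

section
/- Let (Γ,d) be ν-regular with F-function F and let Φ be an interaction with ‖Φ‖_F < ∞. Then for any R ≥ 0: sup_{x∈Γ} Σ_{Z ∋ x, diam(Z) ≤ R} ‖Φ(Z)‖ ≤ ‖Φ‖_F ‖F‖, and if the 2ν-th moment M_{2ν}^F(0) = Σ_{n≥0}(1+n)^{2ν}F(n) is finite, then sup_{x∈Γ} Σ_{Z ∋ x, diam(Z) > R} ‖Φ(Z)‖ ≤ κ² ‖Φ‖_F Σ_{n ≥ ⌊R⌋} (1+n)^{2ν} F(n). -/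
open scoped ENNReal

/-! A set `Z ∋ x` of diameter `> R` has a farthest pair `w, z ∈ Z`. With `n = ⌊d(w,z)⌋ ≥ ⌊R⌋`,
both `w` and `z` lie in the ball of radius `n + 1` about `x`, and `d(w,z) ≥ n`, so the
`F`-bound of the interaction gives `∑_{Z ∋ w,z} ‖Φ(Z)‖ ≤ ‖Φ‖_F F(n)`. Sorting the sets `Z` by
`n` and by their farthest pair, and counting the at most `κ² (1+n)^{2ν}` such pairs by
ν-regularity, yields the tail bound. Sets of diameter `≤ R` need only
`∑_{Z ∋ x} ‖Φ(Z)‖ ≤ ‖Φ‖_F F(0) ≤ ‖Φ‖_F ‖F‖`. -/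

theorem Finset.exists_farthest_pair {Γ : Type*} [PseudoMetricSpace Γ] {Z : Finset Γ}
    (hZ : Z.Nonempty) : ∃ w ∈ Z, ∃ z ∈ Z, ∀ a ∈ Z, ∀ b ∈ Z, dist a b ≤ dist w z := by
  obtain ⟨p, hp, hmax⟩ := (Z ×ˢ Z).exists_max_image (fun p => dist p.1 p.2) (hZ.product hZ)
  exact ⟨p.1, (Finset.mem_product.mp hp).1, p.2, (Finset.mem_product.mp hp).2,
    fun a ha b hb => hmax (a, b) (Finset.mem_product.mpr ⟨ha, hb⟩)⟩

theorem tsum_diam_gt_le_tsum_farthest_pairs {Γ : Type*} [PseudoMetricSpace Γ]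
    (f : Finset Γ → ℝ≥0∞) (x : Γ) (R : ℝ) :
    ∑' Z : {Z : Finset Γ // x ∈ Z ∧ ∃ w ∈ Z, ∃ z ∈ Z, R < dist w z}, f Z
      ≤ ∑' n : {n : ℕ // ⌊R⌋₊ ≤ n},
          ∑' p : {p : Γ × Γ // dist x p.1 ≤ n.1 + 1 ∧ dist x p.2 ≤ n.1 + 1 ∧
              (n.1 : ℝ) ≤ dist p.1 p.2},
            ∑' Z : {Z : Finset Γ // p.1.1 ∈ Z ∧ p.1.2 ∈ Z}, f Z := by
  have farthest : ∀ Z : {Z : Finset Γ // x ∈ Z ∧ ∃ w ∈ Z, ∃ z ∈ Z, R < dist w z},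
      ∃ p : Γ × Γ, p.1 ∈ Z.1 ∧ p.2 ∈ Z.1 ∧ R < dist p.1 p.2 ∧
        dist x p.1 ≤ dist p.1 p.2 ∧ dist x p.2 ≤ dist p.1 p.2 := by
    rintro ⟨Z, hx, w₀, hw₀, z₀, hz₀, hR⟩
    obtain ⟨w, hw, z, hz, hmax⟩ := Finset.exists_farthest_pair ⟨x, hx⟩
    exact ⟨(w, z), hw, hz, hR.trans_le (hmax w₀ hw₀ z₀ hz₀), hmax x hx w hw, hmax x hx z hz⟩
  choose p hp₁ hp₂ hpR hpx₁ hpx₂ using farthest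
  let label (Z : {Z : Finset Γ // x ∈ Z ∧ ∃ w ∈ Z, ∃ z ∈ Z, R < dist w z}) :
      Σ n : {n : ℕ // ⌊R⌋₊ ≤ n},
        Σ p : {p : Γ × Γ // dist x p.1 ≤ n.1 + 1 ∧ dist x p.2 ≤ n.1 + 1 ∧
            (n.1 : ℝ) ≤ dist p.1 p.2},
          {Z : Finset Γ // p.1.1 ∈ Z ∧ p.1.2 ∈ Z} :=
    ⟨⟨⌊dist (p Z).1 (p Z).2⌋₊, Nat.floor_le_floor (hpR Z).le⟩,
      ⟨p Z, (hpx₁ Z).trans (Nat.lt_floor_add_one _).le,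
        (hpx₂ Z).trans (Nat.lt_floor_add_one _).le, Nat.floor_le dist_nonneg⟩,
      ⟨Z.1, hp₁ Z, hp₂ Z⟩⟩
  have label_injective : Function.Injective label :=
    fun Z Z' h => Subtype.ext (congrArg (fun t => t.2.2.1) h)
  calc _ ≤ ∑' t, f t.2.2.1 := ENNReal.tsum_comp_le_tsum_of_injective label_injective _
    _ = _ := by simp only [ENNReal.tsum_sigma']

theorem tsum_pairs_le_encard_mul_encard_mul {α : Type*} (B : Set α) (P : α × α → Prop)
    (g : α × α → ℝ≥0∞) (c : ℝ≥0∞) (hg : ∀ p, P p → g p ≤ c) :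
    ∑' p : {p : α × α // p.1 ∈ B ∧ p.2 ∈ B ∧ P p}, g p ≤ B.encard * B.encard * c :=
  calc ∑' p : {p : α × α // p.1 ∈ B ∧ p.2 ∈ B ∧ P p}, g p
      ≤ ∑' _ : {p : α × α // p.1 ∈ B ∧ p.2 ∈ B ∧ P p}, c :=
        ENNReal.tsum_le_tsum fun p => hg p p.2.2.2
    _ ≤ ∑' _ : ↥(B ×ˢ B), c := ENNReal.tsum_mono_subtype (fun _ => c) fun _ hp => ⟨hp.1, hp.2.1⟩
    _ = B.encard * B.encard * c := by rw [ENNReal.tsum_set_const, Set.encard_prod]; push_cast; rfl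

theorem ofReal_mul_rpow_mul_self_mul {κ c m ν : ℝ} (a : ℝ) (hκ : 0 ≤ κ) (hc : 0 ≤ c)
    (hm : 0 < m) :
    ENNReal.ofReal (κ * m ^ ν) * ENNReal.ofReal (κ * m ^ ν) * ENNReal.ofReal (c * a)
      = ENNReal.ofReal (κ ^ 2 * c) * ENNReal.ofReal (m ^ (2 * ν) * a) := by
  have hκm : 0 ≤ κ * m ^ ν := by positivity
  rw [← ENNReal.ofReal_mul hκm, ← ENNReal.ofReal_mul (by positivity),
    ← ENNReal.ofReal_mul (by positivity), two_mul, Real.rpow_add hm]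
  ring_nf

theorem interaction_sum_bounds_by_diameter_general
    {Γ : Type*} [MetricSpace Γ] {A : Type*} [NormedAddCommGroup A]
    (F : ℝ → ℝ)
    (hFanti : ∀ r s : ℝ, 0 ≤ r → r ≤ s → F s ≤ F r)
    (nF NΦ κ ν : ℝ) (hNΦ : 0 ≤ NΦ) (hκ : 0 ≤ κ)
    (hFint : ∀ x : Γ, ∑' y : Γ, ENNReal.ofReal (F (dist x y)) ≤ ENNReal.ofReal nF)
    (hreg : ∀ (x : Γ) (n : ℕ), 1 ≤ n →
        ({y : Γ | dist x y ≤ (n : ℝ)}).encard ≤ ENNReal.ofReal (κ * (n : ℝ) ^ ν))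
    (Φ : Finset Γ → A)
    (hΦ : ∀ x y : Γ, ∑' Z : {Z : Finset Γ // x ∈ Z ∧ y ∈ Z}, (‖Φ Z.1‖₊ : ℝ≥0∞)
        ≤ ENNReal.ofReal (NΦ * F (dist x y)))
    (R : ℝ) :
    (∀ x : Γ, ∑' Z : {Z : Finset Γ // x ∈ Z ∧ ∀ w ∈ Z, ∀ z ∈ Z, dist w z ≤ R},
        (‖Φ Z.1‖₊ : ℝ≥0∞) ≤ ENNReal.ofReal (NΦ * nF)) ∧
    ((∑' n : ℕ, ENNReal.ofReal ((1 + (n : ℝ)) ^ (2 * ν) * F n) ≠ ⊤) →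
      ∀ x : Γ, ∑' Z : {Z : Finset Γ // x ∈ Z ∧ ∃ w ∈ Z, ∃ z ∈ Z, R < dist w z},
          (‖Φ Z.1‖₊ : ℝ≥0∞)
        ≤ ENNReal.ofReal (κ ^ 2 * NΦ) *
            ∑' n : {n : ℕ // ⌊R⌋₊ ≤ n},
              ENNReal.ofReal ((1 + (n.1 : ℝ)) ^ (2 * ν) * F n.1)) := by
  refine ⟨fun x => ?_, fun _ x => ?_⟩
  · have hF₀ : ENNReal.ofReal (F (dist x x)) ≤ ENNReal.ofReal nF :=
      (ENNReal.le_tsum x).trans (hFint x)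
    calc _ ≤ ∑' Z : {Z : Finset Γ // x ∈ Z ∧ x ∈ Z}, (‖Φ Z.1‖₊ : ℝ≥0∞) :=
          ENNReal.tsum_mono_subtype (fun Z => (‖Φ Z‖₊ : ℝ≥0∞))
            (t := {Z | x ∈ Z ∧ x ∈ Z}) fun _ hZ => ⟨hZ.1, hZ.1⟩
      _ ≤ ENNReal.ofReal (NΦ * F (dist x x)) := hΦ x x
      _ ≤ ENNReal.ofReal (NΦ * nF) := by
          rw [ENNReal.ofReal_mul hNΦ, ENNReal.ofReal_mul hNΦ]; gcongr
  refine (tsum_diam_gt_le_tsum_farthest_pairs (fun Z => (‖Φ Z‖₊ : ℝ≥0∞)) x R).trans ?_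
  rw [← ENNReal.tsum_mul_left]
  refine ENNReal.tsum_le_tsum fun n => ?_
  have hball := hreg x (n.1 + 1) n.1.succ_pos
  push_cast at hball
  calc _ ≤ {y : Γ | dist x y ≤ n.1 + 1}.encard * {y : Γ | dist x y ≤ n.1 + 1}.encard *
          ENNReal.ofReal (NΦ * F n.1) :=
        tsum_pairs_le_encard_mul_encard_mul _ (fun p => (n.1 : ℝ) ≤ dist p.1 p.2) _ _
          fun p hp => (hΦ _ _).trans <| ENNReal.ofReal_le_ofReal <|
            mul_le_mul_of_nonneg_left (hFanti _ _ n.1.cast_nonneg hp) hNΦ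
    _ ≤ ENNReal.ofReal (κ * (n.1 + 1) ^ ν) * ENNReal.ofReal (κ * (n.1 + 1) ^ ν) *
          ENNReal.ofReal (NΦ * F n.1) := by gcongr
    _ = _ := by rw [add_comm (1 : ℝ)]; exact ofReal_mul_rpow_mul_self_mul _ hκ hNΦ n.1.cast_add_one_pos

/-- Let `(Γ,d)` be ν-regular (with constant `κ`) with F-function `F` and
`Φ` an interaction with `‖Φ‖_F ≤ NΦ`.  Then for any `R ≥ 0`:
`sup_x ∑_{Z ∋ x, diam Z ≤ R} ‖Φ(Z)‖ ≤ NΦ ‖F‖`, and if the `2ν`-th moment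
`M_{2ν}^F(0) = ∑_{n ≥ 0} (1+n)^{2ν} F(n)` is finite, then
`sup_x ∑_{Z ∋ x, diam Z > R} ‖Φ(Z)‖ ≤ κ² NΦ ∑_{n ≥ ⌊R⌋} (1+n)^{2ν} F(n)`. -/
theorem interaction_sum_bounds_by_diameter
    {Γ : Type*} [MetricSpace Γ] [Countable Γ] {A : Type*} [NormedAddCommGroup A]
    (F : ℝ → ℝ)
    (hFpos : ∀ r : ℝ, 0 ≤ r → 0 < F r)
    (hFanti : ∀ r s : ℝ, 0 ≤ r → r ≤ s → F s ≤ F r)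
    (nF cF NΦ κ ν : ℝ) (hnF : 0 ≤ nF) (hNΦ : 0 ≤ NΦ) (hκ : 0 ≤ κ) (hν : 0 < ν)
    (hFint : ∀ x : Γ, ∑' y : Γ, ENNReal.ofReal (F (dist x y)) ≤ ENNReal.ofReal nF)
    (hFconv : ∀ x y : Γ, ∑' z : Γ,
        ENNReal.ofReal (F (dist x z)) * ENNReal.ofReal (F (dist z y))
          ≤ ENNReal.ofReal (cF * F (dist x y)))
    (hreg : ∀ (x : Γ) (n : ℕ), 1 ≤ n →
        ({y : Γ | dist x y ≤ (n : ℝ)}).encard ≤ ENNReal.ofReal (κ * (n : ℝ) ^ ν))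
    (Φ : Finset Γ → A)
    (hΦ : ∀ x y : Γ, ∑' Z : {Z : Finset Γ // x ∈ Z ∧ y ∈ Z}, (‖Φ Z.1‖₊ : ℝ≥0∞)
        ≤ ENNReal.ofReal (NΦ * F (dist x y)))
    (R : ℝ) (hR : 0 ≤ R) :
    (∀ x : Γ, ∑' Z : {Z : Finset Γ // x ∈ Z ∧ ∀ w ∈ Z, ∀ z ∈ Z, dist w z ≤ R},
        (‖Φ Z.1‖₊ : ℝ≥0∞) ≤ ENNReal.ofReal (NΦ * nF)) ∧
    ((∑' n : ℕ, ENNReal.ofReal ((1 + (n : ℝ)) ^ (2 * ν) * F n) ≠ ⊤) →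
      ∀ x : Γ, ∑' Z : {Z : Finset Γ // x ∈ Z ∧ ∃ w ∈ Z, ∃ z ∈ Z, R < dist w z},
          (‖Φ Z.1‖₊ : ℝ≥0∞)
        ≤ ENNReal.ofReal (κ ^ 2 * NΦ) *
            ∑' n : {n : ℕ // ⌊R⌋₊ ≤ n},
              ENNReal.ofReal ((1 + (n.1 : ℝ)) ^ (2 * ν) * F n.1)) :=
  interaction_sum_bounds_by_diameter_general F hFanti nF NΦ κ ν hNΦ hκ hFint hreg Φ hΦ R
end

section
/- Let p ≥ 1 and (Γ,d) be ν-regular with F-function F satisfying M_{(p+2)ν}^F(0) < ∞. Then for any interaction Φ with ‖Φ‖_F < ∞ and any x, y ∈ Γ, the p-th moment interaction Φ_p(X) = |X|^p Φ(X) satisfies Σ_{X ∋ x,y} ‖Φ_p(X)‖ ≤ κ^{p+2} ‖Φ‖_F Σ_{n ≥ ⌊d(x,y)⌋} (1+n)^{(p+2)ν} F(n). -/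
open scoped ENNReal
open Metric

/-!
Group the finite sets `X ∋ x, y` according to `n = ⌊diam X⌋ ≥ ⌊d(x, y)⌋`. Such an `X` lies in
the ball of radius `n + 1` about `x`, so `|X|^p ≤ (κ (1 + n)^ν)^p` by ν-regularity. Moreover `X`
contains a pair `u, v` of that ball with `d(u, v) = diam X ≥ n`, and `F` is non-increasing, so
summing the bound `Σ_{X ∋ u, v} ‖Φ(X)‖ ≤ ‖Φ‖_F F(n)` over at most `(κ (1 + n)^ν)^2` such pairs
bounds the total weight of these `X` by `κ^2 (1 + n)^{2ν} ‖Φ‖_F F(n)`.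
-/

namespace Finset

variable {Γ : Type*} [PseudoMetricSpace Γ]

theorem dist_le_diam {Z : Finset Γ} {u v : Γ} (hu : u ∈ Z) (hv : v ∈ Z) :
    dist u v ≤ diam (Z : Set Γ) :=
  dist_le_diam_of_mem Z.finite_toSet.isBounded hu hv

theorem dist_le_one_add_floor_diam {Z : Finset Γ} {u v : Γ} (hu : u ∈ Z) (hv : v ∈ Z) :
    dist u v ≤ 1 + ⌊diam (Z : Set Γ)⌋₊ := by
  linarith [dist_le_diam hu hv, Nat.lt_floor_add_one (diam (Z : Set Γ))]

theorem exists_dist_eq_diam {Z : Finset Γ} (hZ : Z.Nonempty) :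
    ∃ u ∈ Z, ∃ v ∈ Z, dist u v = diam (Z : Set Γ) := by
  obtain ⟨⟨u, v⟩, huv, hmax⟩ :=
    (Z ×ˢ Z).exists_max_image (fun q => dist q.1 q.2) (hZ.product hZ)
  rw [mem_product] at huv
  refine ⟨u, huv.1, v, huv.2, le_antisymm (dist_le_diam huv.1 huv.2) ?_⟩
  exact diam_le_of_forall_dist_le dist_nonneg fun a ha b hb =>
    hmax (a, b) (mem_product.2 ⟨ha, hb⟩)

end Finset

/-- ν-regularity of `Γ` with constant `κ`. -/
def IsRegularWith (Γ : Type*) [PseudoMetricSpace Γ] (κ ν : ℝ) : Prop :=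
  ∀ (x : Γ) (n : ℕ), 1 ≤ n →
    {y : Γ | dist x y ≤ (n : ℝ)}.encard ≤ ENNReal.ofReal (κ * (n : ℝ) ^ ν)

namespace IsRegularWith

variable {Γ : Type*} [PseudoMetricSpace Γ] {κ ν : ℝ}

theorem encard_le (hreg : IsRegularWith Γ κ ν) (x : Γ) (n : ℕ) :
    {y : Γ | dist x y ≤ 1 + n}.encard ≤ ENNReal.ofReal (κ * (1 + n) ^ ν) := by
  simpa [add_comm] using hreg x (n + 1) (Nat.le_add_left 1 n)

theorem card_le (hreg : IsRegularWith Γ κ ν) (hκ : 0 ≤ κ) {Z : Finset Γ} {x : Γ}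
    (hx : x ∈ Z) :
    (Z.card : ℝ) ≤ κ * (1 + ⌊diam (Z : Set Γ)⌋₊) ^ ν := by
  have hsub : (Z : Set Γ) ⊆ {y | dist x y ≤ 1 + ⌊diam (Z : Set Γ)⌋₊} :=
    fun _ hu => Z.dist_le_one_add_floor_diam hx hu
  have h := (ENat.toENNReal_le.2 (Set.encard_le_encard hsub)).trans (hreg.encard_le x _)
  rwa [Set.encard_coe_eq_coe_finsetCard, ENat.toENNReal_coe, ← ENNReal.ofReal_natCast,
    ENNReal.ofReal_le_ofReal_iff (by positivity)] at h

end IsRegularWith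

section Interaction

variable {Γ : Type*} [PseudoMetricSpace Γ] {A : Type*} [SeminormedAddCommGroup A]
  {F : ℝ → ℝ} {N κ ν : ℝ} {Φ : Finset Γ → A}

/-- `‖Φ‖_F ≤ N`. -/
def IsFNormLE (F : ℝ → ℝ) (Φ : Finset Γ → A) (N : ℝ) : Prop :=
  ∀ x y : Γ, ∑' Z : {Z : Finset Γ // x ∈ Z ∧ y ∈ Z}, (‖Φ Z.1‖₊ : ℝ≥0∞)
    ≤ ENNReal.ofReal (N * F (dist x y))

theorem IsFNormLE.tsum_nnnorm_of_le_dist_le (hΦ : IsFNormLE F Φ N)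
    (hF : AntitoneOn F (Set.Ici 0)) (hN : 0 ≤ N) (u v : Γ) (n : ℕ) :
    ∑' Z : {Z : Finset Γ | u ∈ Z ∧ v ∈ Z ∧ (n : ℝ) ≤ dist u v}, (‖Φ Z‖₊ : ℝ≥0∞)
      ≤ ENNReal.ofReal (N * F n) := by
  by_cases huv : (n : ℝ) ≤ dist u v
  · calc _ ≤ ∑' Z : {Z : Finset Γ | u ∈ Z ∧ v ∈ Z}, (‖Φ Z‖₊ : ℝ≥0∞) :=
          ENNReal.tsum_mono_subtype (fun Z => (‖Φ Z‖₊ : ℝ≥0∞)) fun _ hZ => ⟨hZ.1, hZ.2.1⟩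
      _ ≤ ENNReal.ofReal (N * F (dist u v)) := hΦ u v
      _ ≤ _ := ENNReal.ofReal_le_ofReal <| mul_le_mul_of_nonneg_left
          (hF (Set.mem_Ici.2 n.cast_nonneg) (Set.mem_Ici.2 dist_nonneg) huv) hN
  · simp [huv]

theorem IsFNormLE.tsum_nnnorm_le_of_floor_diam_eq (hΦ : IsFNormLE F Φ N)
    (hF : AntitoneOn F (Set.Ici 0)) (hN : 0 ≤ N) (hreg : IsRegularWith Γ κ ν)
    {x : Γ} {n : ℕ} {𝒵 : Set (Finset Γ)} (h𝒵 : ∀ Z ∈ 𝒵, x ∈ Z ∧ ⌊diam (Z : Set Γ)⌋₊ = n) :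
    ∑' Z : 𝒵, (‖Φ Z‖₊ : ℝ≥0∞)
      ≤ ENNReal.ofReal (κ * (1 + n) ^ ν) *
          (ENNReal.ofReal (κ * (1 + n) ^ ν) * ENNReal.ofReal (N * F n)) := by
  let w : Finset Γ → ℝ≥0∞ := fun Z => ‖Φ Z‖₊
  let B : Set Γ := {y | dist x y ≤ 1 + n}
  let T : Γ → Γ → Set (Finset Γ) := fun u v => {Z | u ∈ Z ∧ v ∈ Z ∧ (n : ℝ) ≤ dist u v}
  have hcover : 𝒵 ⊆ ⋃ u : B, ⋃ v : B, T u v := by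
    intro Z hZ
    obtain ⟨hx, rfl⟩ := h𝒵 Z hZ
    obtain ⟨u, hu, v, hv, huv⟩ := Z.exists_dist_eq_diam ⟨x, hx⟩
    simp only [Set.mem_iUnion]
    exact ⟨⟨u, Z.dist_le_one_add_floor_diam hx hu⟩, ⟨v, Z.dist_le_one_add_floor_diam hx hv⟩,
      hu, hv, (Nat.floor_le diam_nonneg).trans huv.ge⟩
  calc ∑' Z : 𝒵, w Z
      ≤ ∑' Z : ⋃ u : B, ⋃ v : B, T u v, w Z := ENNReal.tsum_mono_subtype w hcover
    _ ≤ ∑' u : B, ∑' Z : ⋃ v : B, T u v, w Z :=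
        ENNReal.tsum_iUnion_le_tsum w fun u : B => ⋃ v : B, T u v
    _ ≤ ∑' u : B, ∑' v : B, ∑' Z : T u v, w Z :=
        ENNReal.tsum_le_tsum fun u => ENNReal.tsum_iUnion_le_tsum w fun v : B => T u v
    _ ≤ ∑' _ : B, ∑' _ : B, ENNReal.ofReal (N * F n) :=
        ENNReal.tsum_le_tsum fun u => ENNReal.tsum_le_tsum fun v =>
          hΦ.tsum_nnnorm_of_le_dist_le hF hN u v n
    _ = B.encard * (B.encard * ENNReal.ofReal (N * F n)) := by
        rw [ENNReal.tsum_set_const, ENNReal.tsum_set_const]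
    _ ≤ _ := by gcongr <;> exact hreg.encard_le x n

theorem IsFNormLE.tsum_card_rpow_mul_nnnorm_le_of_floor_diam_eq (hΦ : IsFNormLE F Φ N)
    (hF : AntitoneOn F (Set.Ici 0)) (hN : 0 ≤ N) (hreg : IsRegularWith Γ κ ν) (hκ : 0 ≤ κ)
    {p : ℝ} (hp : 0 ≤ p)
    {x : Γ} {n : ℕ} {𝒵 : Set (Finset Γ)} (h𝒵 : ∀ Z ∈ 𝒵, x ∈ Z ∧ ⌊diam (Z : Set Γ)⌋₊ = n) :
    ∑' Z : 𝒵, ENNReal.ofReal ((Z.1.card : ℝ) ^ p) * (‖Φ Z‖₊ : ℝ≥0∞)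
      ≤ ENNReal.ofReal (κ ^ (p + 2) * N) * ENNReal.ofReal ((1 + n) ^ ((p + 2) * ν) * F n) := by
  set c : ℝ := κ * (1 + n) ^ ν
  have hc : 0 ≤ c := by positivity
  have hcard : ∀ Z ∈ 𝒵, (Z.card : ℝ) ≤ c := by
    intro Z hZ
    obtain ⟨hx, hn⟩ := h𝒵 Z hZ
    simpa only [hn] using hreg.card_le hκ hx
  have hpow : c ^ p * (c * c) = κ ^ (p + 2) * (1 + n) ^ ((p + 2) * ν) := by
    rw [← pow_two, ← Real.rpow_natCast, ← Real.rpow_add' hc (by positivity), Nat.cast_ofNat,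
      Real.mul_rpow hκ (by positivity), ← Real.rpow_mul (by positivity), mul_comm ν]
  calc ∑' Z : 𝒵, ENNReal.ofReal ((Z.1.card : ℝ) ^ p) * (‖Φ Z‖₊ : ℝ≥0∞)
      ≤ ∑' Z : 𝒵, ENNReal.ofReal (c ^ p) * (‖Φ Z‖₊ : ℝ≥0∞) :=
        ENNReal.tsum_le_tsum fun Z => by gcongr; exact hcard Z Z.2
    _ = ENNReal.ofReal (c ^ p) * ∑' Z : 𝒵, (‖Φ Z‖₊ : ℝ≥0∞) := ENNReal.tsum_mul_left
    _ ≤ ENNReal.ofReal (c ^ p) *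
          (ENNReal.ofReal c * (ENNReal.ofReal c * ENNReal.ofReal (N * F n))) := by
        gcongr; exact hΦ.tsum_nnnorm_le_of_floor_diam_eq hF hN hreg h𝒵
    _ = ENNReal.ofReal (c ^ p * (c * c) * N * F n) := by
        rw [← ENNReal.ofReal_mul hc, ← ENNReal.ofReal_mul hc,
          ← ENNReal.ofReal_mul (by positivity)]
        congr 1
        ring
    _ = _ := by
        rw [hpow, ← ENNReal.ofReal_mul (by positivity)]
        congr 1
        ring

end Interaction

theorem moment_interaction_sum_bound_general
    {Γ : Type*} [MetricSpace Γ] {A : Type*} [NormedAddCommGroup A]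
    (p : ℝ) (hp : 1 ≤ p)
    (F : ℝ → ℝ)
    (hFanti : ∀ r s : ℝ, 0 ≤ r → r ≤ s → F s ≤ F r)
    (NΦ κ ν : ℝ) (hNΦ : 0 ≤ NΦ) (hκ : 0 ≤ κ)
    (hreg : ∀ (x : Γ) (n : ℕ), 1 ≤ n →
        ({y : Γ | dist x y ≤ (n : ℝ)}).encard ≤ ENNReal.ofReal (κ * (n : ℝ) ^ ν))
    (Φ : Finset Γ → A)
    (hΦ : ∀ x y : Γ, ∑' Z : {Z : Finset Γ // x ∈ Z ∧ y ∈ Z}, (‖Φ Z.1‖₊ : ℝ≥0∞)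
        ≤ ENNReal.ofReal (NΦ * F (dist x y)))
    (x y : Γ) :
    ∑' Z : {Z : Finset Γ // x ∈ Z ∧ y ∈ Z},
        ENNReal.ofReal ((Z.1.card : ℝ) ^ p) * (‖Φ Z.1‖₊ : ℝ≥0∞)
      ≤ ENNReal.ofReal (κ ^ (p + 2) * NΦ) *
          ∑' n : {n : ℕ // ⌊dist x y⌋₊ ≤ n},
            ENNReal.ofReal ((1 + (n.1 : ℝ)) ^ ((p + 2) * ν) * F n.1) := by
  have hF : AntitoneOn F (Set.Ici 0) := fun r hr s _ hrs => hFanti r s hr hrs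
  let fiber : {n : ℕ // ⌊dist x y⌋₊ ≤ n} → Set (Finset Γ) :=
    fun n => {Z | x ∈ Z ∧ y ∈ Z ∧ ⌊diam (Z : Set Γ)⌋₊ = n}
  let moment : Finset Γ → ℝ≥0∞ := fun Z => ENNReal.ofReal ((Z.card : ℝ) ^ p) * ‖Φ Z‖₊
  have hcover : {Z : Finset Γ | x ∈ Z ∧ y ∈ Z} ⊆ ⋃ n, fiber n := fun Z hZ =>
    Set.mem_iUnion.2 ⟨⟨_, Nat.floor_le_floor (Z.dist_le_diam hZ.1 hZ.2)⟩, hZ.1, hZ.2, rfl⟩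
  calc ∑' Z : {Z : Finset Γ // x ∈ Z ∧ y ∈ Z}, moment Z
      ≤ ∑' Z : ⋃ n, fiber n, moment Z := ENNReal.tsum_mono_subtype moment hcover
    _ ≤ ∑' n, ∑' Z : fiber n, moment Z := ENNReal.tsum_iUnion_le_tsum moment fiber
    _ ≤ ∑' n : {n : ℕ // ⌊dist x y⌋₊ ≤ n}, ENNReal.ofReal (κ ^ (p + 2) * NΦ) *
          ENNReal.ofReal ((1 + (n.1 : ℝ)) ^ ((p + 2) * ν) * F n.1) :=
        ENNReal.tsum_le_tsum fun n =>
          IsFNormLE.tsum_card_rpow_mul_nnnorm_le_of_floor_diam_eq hΦ hF hNΦ hreg hκ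
            (by linarith) fun Z hZ => ⟨hZ.1, hZ.2.2⟩
    _ = _ := ENNReal.tsum_mul_left

/-- Let `p ≥ 1`, `(Γ,d)` be ν-regular (constant `κ`) with F-function `F`
satisfying `M_{(p+2)ν}^F(0) < ∞`.  Then for any interaction `Φ` with `‖Φ‖_F ≤ NΦ` and any
`x, y ∈ Γ`, the `p`-th moment interaction `Φ_p(X) = |X|^p Φ(X)` satisfies
`∑_{X ∋ x,y} ‖Φ_p(X)‖ ≤ κ^{p+2} NΦ ∑_{n ≥ ⌊d(x,y)⌋} (1+n)^{(p+2)ν} F(n)`. -/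
theorem moment_interaction_sum_bound
    {Γ : Type*} [MetricSpace Γ] [Countable Γ] {A : Type*} [NormedAddCommGroup A]
    (p : ℝ) (hp : 1 ≤ p)
    (F : ℝ → ℝ)
    (hFpos : ∀ r : ℝ, 0 ≤ r → 0 < F r)
    (hFanti : ∀ r s : ℝ, 0 ≤ r → r ≤ s → F s ≤ F r)
    (nF cF NΦ κ ν : ℝ) (hNΦ : 0 ≤ NΦ) (hκ : 0 ≤ κ) (hν : 0 < ν)
    (hFint : ∀ x : Γ, ∑' y : Γ, ENNReal.ofReal (F (dist x y)) ≤ ENNReal.ofReal nF)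
    (hFconv : ∀ x y : Γ, ∑' z : Γ,
        ENNReal.ofReal (F (dist x z)) * ENNReal.ofReal (F (dist z y))
          ≤ ENNReal.ofReal (cF * F (dist x y)))
    (hmom : ∑' n : ℕ, ENNReal.ofReal ((1 + (n : ℝ)) ^ ((p + 2) * ν) * F n) ≠ ⊤)
    (hreg : ∀ (x : Γ) (n : ℕ), 1 ≤ n →
        ({y : Γ | dist x y ≤ (n : ℝ)}).encard ≤ ENNReal.ofReal (κ * (n : ℝ) ^ ν))
    (Φ : Finset Γ → A)
    (hΦ : ∀ x y : Γ, ∑' Z : {Z : Finset Γ // x ∈ Z ∧ y ∈ Z}, (‖Φ Z.1‖₊ : ℝ≥0∞)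
        ≤ ENNReal.ofReal (NΦ * F (dist x y)))
    (x y : Γ) :
    ∑' Z : {Z : Finset Γ // x ∈ Z ∧ y ∈ Z},
        ENNReal.ofReal ((Z.1.card : ℝ) ^ p) * (‖Φ Z.1‖₊ : ℝ≥0∞)
      ≤ ENNReal.ofReal (κ ^ (p + 2) * NΦ) *
          ∑' n : {n : ℕ // ⌊dist x y⌋₊ ≤ n},
            ENNReal.ofReal ((1 + (n.1 : ℝ)) ^ ((p + 2) * ν) * F n.1) :=
  moment_interaction_sum_bound_general p hp F hFanti NΦ κ ν hNΦ hκ hreg Φ hΦ x y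
end

section
/- For any p ≥ 0, the function g(r) defined by g(r) = e^p/p^p for 0 ≤ r ≤ e^p and g(r) = r/(ln r)^p for r ≥ e^p is non-negative, non-decreasing, and subadditive: g(r+s) ≤ g(r) + g(s) for all r, s ≥ 0. -/
/-- The weight function `g(r) = e^p/p^p` for `0 ≤ r ≤ e^p` and `g(r) = r/(ln r)^p` for
`r ≥ e^p` (real powers). -/
noncomputable def logWeight (p : ℝ) (r : ℝ) : ℝ :=
  if r ≤ Real.exp p then Real.exp p / p ^ p else r / (Real.log r) ^ p

/-!
Write `h(u) = u / (log u)^p`. Since `h(e^p) = e^p/p^p`, the weight is `g(r) = h(max r e^p)`, and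
`h` is non-decreasing on `[e^p, ∞)` because `e^x / x^p` is non-decreasing on `[p, ∞)`. Hence `g`
is monotone. For subadditivity, only `r + s > e^p` needs an argument: there
`g(r+s) = r/(log(r+s))^p + s/(log(r+s))^p`, and `r/(log(r+s))^p ≤ h(max r e^p) = g(r)` because
the numerator grows and the denominator shrinks when `r + s` is replaced by `max r e^p`.
-/

open Real Set

lemma monotoneOn_exp_div_rpow {p : ℝ} (hp : 0 ≤ p) :
    MonotoneOn (fun x => exp x / x ^ p) (Ici p) := by
  intro x hpx y _ hxy
  rcases hp.eq_or_lt with rfl | hp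
  · simpa using hxy
  have hx : 0 < x := hp.trans_le hpx
  have hy : 0 < y := hx.trans_le hxy
  have hexponent : log (y / x) * p ≤ y - x :=
    calc log (y / x) * p ≤ (y / x - 1) * p :=
          mul_le_mul_of_nonneg_right (log_le_sub_one_of_pos (div_pos hy hx)) hp.le
      _ ≤ (y / x - 1) * x :=
          mul_le_mul_of_nonneg_left hpx (sub_nonneg.2 ((one_le_div hx).2 hxy))
      _ = y - x := by field_simp
  have hratio : y ^ p / x ^ p ≤ exp y / exp x :=
    calc y ^ p / x ^ p = exp (log (y / x) * p) := by
          rw [← div_rpow hy.le hx.le, rpow_def_of_pos (div_pos hy hx)]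
      _ ≤ exp (y - x) := exp_le_exp.2 hexponent
      _ = exp y / exp x := exp_sub y x
  rw [div_le_div_iff₀ (rpow_pos_of_pos hx p) (exp_pos x)] at hratio
  rw [div_le_div_iff₀ (rpow_pos_of_pos hx p) (rpow_pos_of_pos hy p)]
  linarith

lemma monotoneOn_div_log_rpow {p : ℝ} (hp : 0 ≤ p) :
    MonotoneOn (fun u => u / log u ^ p) (Ici (exp p)) := by
  intro u hu v hv huv
  have hu0 : 0 < u := (exp_pos p).trans_le hu
  have hv0 : 0 < v := hu0.trans_le huv
  have key := monotoneOn_exp_div_rpow hp ((le_log_iff_exp_le hu0).2 hu)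
    ((le_log_iff_exp_le hv0).2 hv) (log_le_log hu0 huv)
  simpa only [exp_log hu0, exp_log hv0] using key

lemma logWeight_eq_max (p r : ℝ) :
    logWeight p r = max r (exp p) / log (max r (exp p)) ^ p := by
  unfold logWeight
  split_ifs with h
  · rw [max_eq_right h, log_exp]
  · rw [max_eq_left (not_le.1 h).le]

lemma logWeight_of_le_exp {p r : ℝ} (h : r ≤ exp p) : logWeight p r = exp p / p ^ p :=
  if_pos h

lemma logWeight_of_exp_le {p r : ℝ} (h : exp p ≤ r) : logWeight p r = r / log r ^ p := by
  rw [logWeight_eq_max, max_eq_left h]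

lemma logWeight_nonneg {p : ℝ} (hp : 0 ≤ p) (r : ℝ) : 0 ≤ logWeight p r := by
  have hm : 1 ≤ max r (exp p) := (one_le_exp hp).trans (le_max_right r _)
  rw [logWeight_eq_max]
  exact div_nonneg (zero_le_one.trans hm) (rpow_nonneg (log_nonneg hm) p)

lemma logWeight_monotone {p : ℝ} (hp : 0 ≤ p) : Monotone (logWeight p) := by
  intro r s hrs
  rw [logWeight_eq_max, logWeight_eq_max]
  exact monotoneOn_div_log_rpow hp (le_max_right r _) (le_max_right s _)
    (max_le_max_right _ hrs)

lemma div_log_rpow_le_logWeight {p r t : ℝ} (hp : 0 ≤ p) (hrt : r ≤ t) (ht : exp p ≤ t) :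
    r / log t ^ p ≤ logWeight p r := by
  set m := max r (exp p)
  have hm : 0 < m := (exp_pos p).trans_le (le_max_right r _)
  have hlog : p ≤ log m := (le_log_iff_exp_le hm).2 (le_max_right r _)
  have hden : 0 < log m ^ p := by
    rcases hp.eq_or_lt with rfl | hp
    · simp
    · exact rpow_pos_of_pos (hp.trans_le hlog) p
  rw [logWeight_eq_max]
  exact div_le_div₀ hm.le (le_max_left r _) hden
    (rpow_le_rpow (hp.trans hlog) (log_le_log hm (max_le hrt ht)) hp)

lemma logWeight_add_le {p r s : ℝ} (hp : 0 ≤ p) (hr : 0 ≤ r) (hs : 0 ≤ s) :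
    logWeight p (r + s) ≤ logWeight p r + logWeight p s := by
  rcases le_total (r + s) (exp p) with h | h
  · rw [logWeight_of_le_exp h, logWeight_of_le_exp (show s ≤ exp p by linarith)]
    linarith [logWeight_nonneg hp r]
  · rw [logWeight_of_exp_le h, add_div]
    exact add_le_add (div_log_rpow_le_logWeight hp (by linarith) h)
      (div_log_rpow_le_logWeight hp (by linarith) h)

/-- For any `p ≥ 0`, the function `g = logWeight p` is non-negative,
non-decreasing, and subadditive on `[0,∞)`: `g(r+s) ≤ g(r) + g(s)` for all `r, s ≥ 0`. -/
theorem logWeight_nonneg_monotone_subadditive (p : ℝ) (hp : 0 ≤ p) :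
    (∀ r : ℝ, 0 ≤ r → 0 ≤ logWeight p r) ∧
    (∀ r s : ℝ, 0 ≤ r → r ≤ s → logWeight p r ≤ logWeight p s) ∧
    (∀ r s : ℝ, 0 ≤ r → 0 ≤ s → logWeight p (r + s) ≤ logWeight p r + logWeight p s) :=
  ⟨fun r _ => logWeight_nonneg hp r, fun _ _ _ hrs => logWeight_monotone hp hrs,
    fun _ _ hr hs => logWeight_add_le hp hr hs⟩
end
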